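/- arXiv:1311.4655 — 5 statements merged into one kernel-verified Lean document; each statement's English description precedes it below -/
import Mathlib

section
/- Let s ∈ (1/2,1) and fix M ≥ 1, K ≥ 1. There exist a constant C = C(M,K,s) > 0 and, for every ε ∈ (0,1), a constant N₀ = N₀(M,K,s,ε) > 0 such that for every N > N₀, every f ∈ GF(M,N,K,s) with components f_k(t) = α_k(t)s_k(2πN_kφ_k(t)), every pair (n,k) with ŝ_k(n) ≠ 0, and every (a,b) ∈ R_ε ∩ Z_{n,k}, one has |v_f(a,b) − nN_kφ_k′(b)| ≤ C√ε · |nN_kφ_k′(b)|. -/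
open MeasureTheory Filter Set

noncomputable section

/-- Fourier transform with the `e^{-2πiξt}` convention. -/
def ft (w : ℝ → ℂ) (ξ : ℝ) : ℂ :=
  ∫ t : ℝ, w t * Complex.exp ((-(2 * Real.pi * ξ * t) : ℝ) * Complex.I)

/-- A mother wave packet with support parameter `d`. -/
structure IsMotherWavePacket (d : ℝ) (w : ℝ → ℂ) : Prop where
  schwartz : ∃ W : SchwartzMap ℝ ℂ, ∀ t, W t = w t
  real_ft : ∀ ξ : ℝ, (ft w ξ).im = 0
  nonneg_ft : ∀ ξ : ℝ, 0 ≤ (ft w ξ).re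
  smooth_ft : ContDiff ℝ (⊤ : ℕ∞) (ft w)
  supp_ft : ∀ ξ : ℝ, ξ ∉ Set.Ioo (-d) d → ft w ξ = 0

/-- The wave packet `w_{ab}` with geometric scaling parameter `s`. -/
def wavePacket (w : ℝ → ℂ) (s a b : ℝ) (t : ℝ) : ℂ :=
  ((|a| ^ (s / 2) : ℝ) : ℂ) * w (|a| ^ s * (t - b)) *
    Complex.exp ((2 * Real.pi * (t - b) * a : ℝ) * Complex.I)

/-- The wave packet transform `W_f(a,b)`. -/
def WPT (w : ℝ → ℂ) (s : ℝ) (f : ℝ → ℂ) (a b : ℝ) : ℂ :=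
  ∫ t : ℝ, (starRingEnd ℂ) (wavePacket w s a b t) * f t

/-- The instantaneous frequency information function `v_f(a,b)`. -/
def vIF (w : ℝ → ℂ) (s : ℝ) (f : ℝ → ℂ) (a b : ℝ) : ℂ :=
  deriv (fun b' => WPT w s f a b') b / (2 * Real.pi * Complex.I * WPT w s f a b)

/-- A general shape function of class `S_M`, with Fourier coefficients `c`. -/
structure IsShapeFn (M : ℝ) (sh : ℝ → ℂ) (c : ℤ → ℂ) : Prop where
  periodic : Function.Periodic sh (2 * Real.pi)
  unif_conv : TendstoUniformly
    (fun (m : ℕ) (t : ℝ) =>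
      ∑ n ∈ Finset.Icc (-(m : ℤ)) (m : ℤ), c n * Complex.exp ((n * t : ℝ) * Complex.I))
    sh Filter.atTop
  l2norm : ∫ t in (-Real.pi)..Real.pi, ‖sh t‖ ^ 2 = 1
  linf : ∀ t, ‖sh t‖ ≤ M
  summable : Summable fun n : ℤ => ‖c n‖
  l1 : ∑' n : ℤ, ‖c n‖ ≤ M
  zero_mean : c 0 = 0
  gcd_one : ∀ m : ℕ, (∀ n : ℤ, c n ≠ 0 → (m : ℤ) ∣ n) → m = 1

/-- The amplitude/phase data of a general intrinsic mode type function of type `(M,N)`: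
`t ↦ α t * sh (2πNφ(t))`. -/
structure IsGIMT (M N : ℝ) (α : ℝ → ℝ) (sh : ℝ → ℂ) (c : ℤ → ℂ) (φ : ℝ → ℝ) : Prop where
  shape : IsShapeFn M sh c
  α_smooth : ContDiff ℝ (⊤ : ℕ∞) α
  α_deriv : ∀ t, |deriv α t| ≤ M
  α_lb : ∀ t, 1 / M ≤ α t
  α_ub : ∀ t, α t ≤ M
  φ_smooth : ContDiff ℝ (⊤ : ℕ∞) φ
  φ'_lb : ∀ t, 1 / M ≤ deriv φ t
  φ'_ub : ∀ t, deriv φ t ≤ M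
  φ''_bound : ∀ t, |deriv (deriv φ) t| ≤ M

/-- A well-separated general superposition of type `(M,N,K,s)` (the class `GF(M,N,K,s)`),
where the mother wave packet has support parameter `d`. -/
structure IsGF (d s M N : ℝ) (K : ℕ) (f : ℝ → ℂ)
    (α : Fin K → ℝ → ℝ) (sh : Fin K → ℝ → ℂ) (c : Fin K → ℤ → ℂ)
    (φ : Fin K → ℝ → ℝ) (Nk : Fin K → ℝ) : Prop where
  gimt : ∀ k, IsGIMT M (Nk k) (α k) (sh k) (c k) (φ k)
  Nk_ge : ∀ k, N ≤ Nk k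
  sum_eq : ∀ t, f t = ∑ k, ((α k t : ℝ) : ℂ) * sh k (2 * Real.pi * Nk k * φ k t)
  separated : ∀ a b : ℝ, 1 ≤ |a| →
    ∀ (k₁ k₂ : Fin K) (n₁ n₂ : ℤ), c k₁ n₁ ≠ 0 → c k₂ n₂ ≠ 0 →
      |a| ^ (-s) * |a - (n₁ : ℝ) * Nk k₁ * deriv (φ k₁) b| < d →
      |a| ^ (-s) * |a - (n₂ : ℝ) * Nk k₂ * deriv (φ k₂) b| < d →
      k₁ = k₂ ∧ n₁ = n₂

/-- The time-frequency region `Z_{n,k} = {(a,b) : |a| ≥ 1, |a − nN_kφ_k′(b)| ≤ d|a|^s}`. -/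
def Zset (d s Nk : ℝ) (φ : ℝ → ℝ) (n : ℤ) : Set (ℝ × ℝ) :=
  {p : ℝ × ℝ | 1 ≤ |p.1| ∧ |p.1 - (n : ℝ) * Nk * deriv φ p.2| ≤ d * |p.1| ^ s}

/-- The region `R_ε = {(a,b) : |a| ≥ 1, |W_f(a,b)| ≥ |a|^{−s/2}√ε}`. -/
def Rset (w : ℝ → ℂ) (s : ℝ) (f : ℝ → ℂ) (ε : ℝ) : Set (ℝ × ℝ) :=
  {p : ℝ × ℝ | 1 ≤ |p.1| ∧
    (|p.1| ^ (-(s / 2)) : ℝ) * Real.sqrt ε ≤ ‖WPT w s f p.1 p.2‖}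

lemma schwartz_decay_sq (W : SchwartzMap ℝ ℂ) :
    ∃ D : ℝ, 0 < D ∧ ∀ x : ℝ, ‖W x‖ * (1 + x ^ 2) ≤ D := by
  obtain ⟨C0, hC0p, hC0⟩ := W.decay 0 0
  obtain ⟨C2, hC2p, hC2⟩ := W.decay 2 0
  refine ⟨C0 + C2, by positivity, fun x => ?_⟩
  have h0 := hC0 x
  have h2 := hC2 x
  simp only [pow_zero, one_mul, norm_iteratedFDeriv_zero, Real.norm_eq_abs] at h0 h2
  nlinarith [norm_nonneg (W x), sq_abs x, sq_nonneg x]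

lemma decay_ball_bound {W : ℝ → ℂ} {D : ℝ} (hD : ∀ x : ℝ, ‖W x‖ * (1 + x ^ 2) ≤ D)
    {A : ℝ} (hA : 1 ≤ A) {b x : ℝ} (t : ℝ) (hx : |x - b| ≤ 1) :
    ‖W (A * (t - x))‖ ≤ 5 * D * (1 + (t - b) ^ 2)⁻¹ := by
  have h := hD (A * (t - x))
  have hn : (0:ℝ) ≤ ‖W (A * (t - x))‖ := norm_nonneg _
  have h1 : (0:ℝ) < 1 + (t - b) ^ 2 := by positivity
  have hA2 : (t - x) ^ 2 ≤ (A * (t - x)) ^ 2 := by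
    have h1 : 1 ≤ A ^ 2 := by nlinarith
    calc (t - x) ^ 2 = 1 * (t - x) ^ 2 := by ring
      _ ≤ A ^ 2 * (t - x) ^ 2 := mul_le_mul_of_nonneg_right h1 (sq_nonneg _)
      _ = (A * (t - x)) ^ 2 := by ring
  have habs : (x - b) ^ 2 ≤ 1 := by nlinarith [sq_abs (x - b), abs_nonneg (x - b)]
  have key : 1 + (t - b) ^ 2 ≤ 5 * (1 + (A * (t - x)) ^ 2) := by
    nlinarith [sq_nonneg ((t - x) - (x - b)), sq_nonneg ((t - x) + (x - b))]
  have goal' : ‖W (A * (t - x))‖ * (1 + (t - b) ^ 2) ≤ 5 * D := by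
    calc ‖W (A * (t - x))‖ * (1 + (t - b) ^ 2)
        ≤ ‖W (A * (t - x))‖ * (5 * (1 + (A * (t - x)) ^ 2)) :=
          mul_le_mul_of_nonneg_left key hn
      _ = 5 * (‖W (A * (t - x))‖ * (1 + (A * (t - x)) ^ 2)) := by ring
      _ ≤ 5 * D := by linarith
  calc ‖W (A * (t - x))‖ = ‖W (A * (t - x))‖ * (1 + (t - b) ^ 2) * (1 + (t - b) ^ 2)⁻¹ := by
        field_simp
    _ ≤ 5 * D * (1 + (t - b) ^ 2)⁻¹ := mul_le_mul_of_nonneg_right goal' (by positivity)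

lemma conj_wavePacket (w : ℝ → ℂ) (s a x t : ℝ) :
    (starRingEnd ℂ) (wavePacket w s a x t)
      = ((|a| ^ (s / 2) : ℝ) : ℂ) * (starRingEnd ℂ) (w (|a| ^ s * (t - x))) *
        Complex.exp (((-(2 * Real.pi * (t - x) * a) : ℝ) : ℂ) * Complex.I) := by
  simp only [wavePacket, map_mul, Complex.conj_ofReal, ← Complex.exp_conj, Complex.conj_I,
    Complex.ofReal_neg, mul_neg, neg_mul]

lemma WPT_hasDerivAt (W₀ : SchwartzMap ℝ ℂ) (s : ℝ) (hs : 0 < s)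
    (f : ℝ → ℂ) (hf : Continuous f) (Cf : ℝ) (hCf : 0 ≤ Cf) (hfb : ∀ t, ‖f t‖ ≤ Cf)
    (a : ℝ) (ha : 1 ≤ |a|) (b : ℝ) :
    ∃ E : ℂ, ‖E‖ ≤ |a| ^ (s / 2) * (∫ t : ℝ, ‖deriv (⇑W₀) t‖) * Cf ∧
      HasDerivAt (fun b' => WPT (⇑W₀) s f a b')
        (2 * Real.pi * a * Complex.I * WPT (⇑W₀) s f a b + E) b := by
  have hapos : (0:ℝ) < |a| := lt_of_lt_of_le one_pos ha
  set A : ℝ := |a| ^ s with hA_def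
  have hA1 : 1 ≤ A := Real.one_le_rpow ha hs.le
  have hA0 : 0 < A := lt_of_lt_of_le one_pos hA1
  set c₁ : ℝ := |a| ^ (s / 2) with hc₁_def
  have hc₁ : 0 < c₁ := Real.rpow_pos_of_pos hapos _
  set W₁ : SchwartzMap ℝ ℂ := SchwartzMap.derivCLM ℝ ℂ W₀ with hW₁_def
  have hW₁_apply : ∀ x, W₁ x = deriv (⇑W₀) x := fun x => SchwartzMap.derivCLM_apply ℝ W₀ x
  obtain ⟨D₀, hD₀p, hD₀⟩ := schwartz_decay_sq W₀
  obtain ⟨D₁, hD₁p, hD₁⟩ := schwartz_decay_sq W₁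
  set F : ℝ → ℝ → ℂ := fun x t => (starRingEnd ℂ) (wavePacket (⇑W₀) s a x t) * f t with hF_def
  set G : ℝ → ℝ → ℂ := fun x t =>
    ((c₁ : ℝ) : ℂ) * (starRingEnd ℂ) (W₁ (A * (t - x))) *
      Complex.exp (((-(2 * Real.pi * (t - x) * a) : ℝ) : ℂ) * Complex.I) * f t with hG_def
  set F' : ℝ → ℝ → ℂ := fun x t =>
    2 * Real.pi * a * Complex.I * F x t - ((A : ℝ) : ℂ) * G x t with hF'_def
  -- pointwise differentiability
  have h_diff : ∀ (t x : ℝ), HasDerivAt (fun y => F y t) (F' x t) x := by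
    intro t x
    have hinner : HasDerivAt (fun y : ℝ => A * (t - y)) (-A) x := by
      simpa using ((hasDerivAt_const x t).sub (hasDerivAt_id x)).const_mul A
    have hWd : HasDerivAt (⇑W₀) (W₁ (A * (t - x))) (A * (t - x)) := by
      rw [hW₁_apply]
      exact (W₀.differentiable.differentiableAt).hasDerivAt
    have hk : HasDerivAt (fun y : ℝ => (⇑W₀) (A * (t - y))) ((-A) • W₁ (A * (t - x))) x :=
      hWd.scomp x hinner
    have hconj : HasDerivAt (fun y : ℝ => (starRingEnd ℂ) ((⇑W₀) (A * (t - y))))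
        ((starRingEnd ℂ) ((-A) • W₁ (A * (t - x)))) x := by
      have h2 := (Complex.conjCLE.toContinuousLinearMap.hasFDerivAt
        (x := (⇑W₀) (A * (t - x)))).comp_hasDerivAt x hk
      simpa [Function.comp_def, Complex.conjCAE_apply] using h2
    have hθ : HasDerivAt (fun y : ℝ => -(2 * Real.pi * (t - y) * a)) (2 * Real.pi * a) x := by
      have h1 : HasDerivAt (fun y : ℝ => t - y) (-1) x := by
        simpa using (hasDerivAt_id x).const_sub t
      have h2 := ((h1.const_mul (2 * Real.pi)).mul_const a).neg
      refine h2.congr_deriv ?_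
      ring
    have hexp : HasDerivAt
        (fun y : ℝ => Complex.exp (((-(2 * Real.pi * (t - y) * a) : ℝ) : ℂ) * Complex.I))
        (Complex.exp (((-(2 * Real.pi * (t - x) * a) : ℝ) : ℂ) * Complex.I)
          * (((2 * Real.pi * a : ℝ) : ℂ) * Complex.I)) x :=
      (hθ.ofReal_comp.mul_const Complex.I).cexp
    have hprod := ((hconj.const_mul ((c₁ : ℝ) : ℂ)).mul hexp).mul_const (f t)
    have hF_eq : (fun y => F y t) = fun y =>
        (((c₁ : ℝ) : ℂ) * (starRingEnd ℂ) ((⇑W₀) (A * (t - y))) *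
          Complex.exp (((-(2 * Real.pi * (t - y) * a) : ℝ) : ℂ) * Complex.I)) * f t := by
      funext y
      rw [hF_def]
      simp only []
      rw [conj_wavePacket]
    rw [hF_eq]
    refine hprod.congr_deriv ?_
    rw [hF'_def, hG_def, hF_def]
    simp only []
    rw [conj_wavePacket]
    simp only [Complex.real_smul, map_mul, map_neg, Complex.conj_ofReal, Complex.ofReal_neg]
    push_cast
    ring
  -- continuity in t
  have hF_cont : ∀ x, Continuous fun t => F x t := by
    intro x
    apply Continuous.mul _ hf
    apply Complex.continuous_conj.comp
    unfold wavePacket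
    apply Continuous.mul
    · exact continuous_const.mul
        (W₀.continuous.comp (continuous_const.mul ((continuous_id.sub continuous_const))))
    · exact Complex.continuous_exp.comp
        ((Complex.continuous_ofReal.comp
          (((continuous_const.mul (continuous_id.sub continuous_const))).mul
            continuous_const)).mul continuous_const)
  have hG_cont : Continuous fun t => G b t := by
    apply Continuous.mul _ hf
    apply Continuous.mul
    · exact continuous_const.mul
        (Complex.continuous_conj.comp
          (W₁.continuous.comp (continuous_const.mul ((continuous_id.sub continuous_const)))))
    · exact Complex.continuous_exp.comp
        ((Complex.continuous_ofReal.comp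
          (((continuous_const.mul (continuous_id.sub continuous_const))).mul
            continuous_const).neg).mul continuous_const)
  -- norm identities
  have hnormF : ∀ x t, ‖F x t‖ = c₁ * ‖(⇑W₀) (A * (t - x))‖ * ‖f t‖ := by
    intro x t
    rw [hF_def]
    simp only []
    rw [conj_wavePacket]
    simp only [norm_mul, Complex.norm_conj, Complex.norm_real, Real.norm_eq_abs,
      Complex.norm_exp_ofReal_mul_I, abs_of_pos hc₁, mul_one]
    rw [abs_of_pos hc₁]
  have hnormG : ∀ x t, ‖G x t‖ = c₁ * ‖W₁ (A * (t - x))‖ * ‖f t‖ := by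
    intro x t
    rw [hG_def]
    simp only [norm_mul, Complex.norm_conj, Complex.norm_real, Real.norm_eq_abs,
      Complex.norm_exp_ofReal_mul_I, abs_of_pos hc₁, mul_one]
  -- integrability
  have hint0 : Integrable (fun t : ℝ => ‖(⇑W₀) (A * (t - b))‖) :=
    ((W₀.integrable.norm).comp_mul_left' hA0.ne').comp_sub_right b
  have hint1 : Integrable (fun t : ℝ => ‖W₁ (A * (t - b))‖) :=
    ((W₁.integrable.norm).comp_mul_left' hA0.ne').comp_sub_right b
  have hF_int : Integrable (fun t => F b t) := by
    apply Integrable.mono' (hint0.const_mul (c₁ * Cf)) (hF_cont b).aestronglyMeasurable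
    filter_upwards with t
    rw [hnormF b t]
    calc c₁ * ‖(⇑W₀) (A * (t - b))‖ * ‖f t‖ ≤ c₁ * ‖(⇑W₀) (A * (t - b))‖ * Cf := by
          apply mul_le_mul_of_nonneg_left (hfb t) (by positivity)
      _ = c₁ * Cf * ‖(⇑W₀) (A * (t - b))‖ := by ring
  have hG_int : Integrable (fun t => G b t) := by
    apply Integrable.mono' (hint1.const_mul (c₁ * Cf)) hG_cont.aestronglyMeasurable
    filter_upwards with t
    rw [hnormG b t]
    calc c₁ * ‖W₁ (A * (t - b))‖ * ‖f t‖ ≤ c₁ * ‖W₁ (A * (t - b))‖ * Cf := by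
          apply mul_le_mul_of_nonneg_left (hfb t) (by positivity)
      _ = c₁ * Cf * ‖W₁ (A * (t - b))‖ := by ring
  -- dominated differentiation
  set bound : ℝ → ℝ := fun t =>
    (c₁ * Cf * 5 * (2 * Real.pi * |a| * D₀ + A * D₁)) * (1 + (t - b) ^ 2)⁻¹ with hbound_def
  have hbound_int : Integrable bound := by
    have h1 : Integrable (fun t : ℝ => (1 + (t - b) ^ 2)⁻¹) := by
      have := integrable_inv_one_add_sq.comp_sub_right b
      simpa using this
    exact h1.const_mul _
  have h_bound : ∀ᵐ t : ℝ, ∀ x ∈ Metric.ball b 1, ‖F' x t‖ ≤ bound t := by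
    filter_upwards with t
    intro x hx
    have hx1 : |x - b| ≤ 1 := by
      rw [Metric.mem_ball, Real.dist_eq] at hx
      exact hx.le
    have hb0 : ‖(⇑W₀) (A * (t - x))‖ ≤ 5 * D₀ * (1 + (t - b) ^ 2)⁻¹ :=
      decay_ball_bound hD₀ hA1 t hx1
    have hb1 : ‖W₁ (A * (t - x))‖ ≤ 5 * D₁ * (1 + (t - b) ^ 2)⁻¹ :=
      decay_ball_bound hD₁ hA1 t hx1
    have hFx : ‖F x t‖ ≤ c₁ * Cf * (5 * D₀ * (1 + (t - b) ^ 2)⁻¹) := by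
      rw [hnormF x t]
      calc c₁ * ‖(⇑W₀) (A * (t - x))‖ * ‖f t‖
          ≤ c₁ * (5 * D₀ * (1 + (t - b) ^ 2)⁻¹) * Cf := by
            apply mul_le_mul (mul_le_mul_of_nonneg_left hb0 hc₁.le) (hfb t) (norm_nonneg _)
            positivity
        _ = c₁ * Cf * (5 * D₀ * (1 + (t - b) ^ 2)⁻¹) := by ring
    have hGx : ‖G x t‖ ≤ c₁ * Cf * (5 * D₁ * (1 + (t - b) ^ 2)⁻¹) := by
      rw [hnormG x t]
      calc c₁ * ‖W₁ (A * (t - x))‖ * ‖f t‖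
          ≤ c₁ * (5 * D₁ * (1 + (t - b) ^ 2)⁻¹) * Cf := by
            apply mul_le_mul (mul_le_mul_of_nonneg_left hb1 hc₁.le) (hfb t) (norm_nonneg _)
            positivity
        _ = c₁ * Cf * (5 * D₁ * (1 + (t - b) ^ 2)⁻¹) := by ring
    rw [hF'_def]
    simp only []
    calc ‖2 * Real.pi * a * Complex.I * F x t - ((A : ℝ) : ℂ) * G x t‖
        ≤ ‖2 * Real.pi * a * Complex.I * F x t‖ + ‖((A : ℝ) : ℂ) * G x t‖ := norm_sub_le _ _
      _ = 2 * Real.pi * |a| * ‖F x t‖ + A * ‖G x t‖ := by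
          simp only [norm_mul, Complex.norm_I, Complex.norm_real, Real.norm_eq_abs,
            Complex.norm_two, mul_one]
          rw [abs_of_pos Real.pi_pos, abs_of_pos hA0]
          try ring_nf
          try ring
      _ ≤ 2 * Real.pi * |a| * (c₁ * Cf * (5 * D₀ * (1 + (t - b) ^ 2)⁻¹))
            + A * (c₁ * Cf * (5 * D₁ * (1 + (t - b) ^ 2)⁻¹)) := by
          have h2 : (0:ℝ) ≤ 2 * Real.pi * |a| := by positivity
          exact add_le_add (mul_le_mul_of_nonneg_left hFx h2)
            (mul_le_mul_of_nonneg_left hGx hA0.le)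
      _ = bound t := by rw [hbound_def]; ring
  have h_diff' : ∀ᵐ t : ℝ, ∀ x ∈ Metric.ball b 1, HasDerivAt (fun y => F y t) (F' x t) x := by
    filter_upwards with t
    intro x _
    exact h_diff t x
  have hF'_meas : AEStronglyMeasurable (fun t => F' b t) volume := by
    apply Continuous.aestronglyMeasurable
    rw [hF'_def]
    exact (continuous_const.mul (hF_cont b)).sub (continuous_const.mul hG_cont)
  have hF_meas : ∀ᶠ x in nhds b, AEStronglyMeasurable (fun t => F x t) volume :=
    Filter.Eventually.of_forall fun x => (hF_cont x).aestronglyMeasurable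
  have main := hasDerivAt_integral_of_dominated_loc_of_deriv_le (Metric.ball_mem_nhds b one_pos) hF_meas hF_int hF'_meas
    h_bound hbound_int h_diff'
  -- compute the derivative value
  have hI1eq : ∫ t : ℝ, ‖W₁ (A * (t - b))‖ = A⁻¹ * ∫ y : ℝ, ‖W₁ y‖ := by
    rw [MeasureTheory.integral_sub_right_eq_self (fun u : ℝ => ‖W₁ (A * u)‖) b]
    rw [MeasureTheory.Measure.integral_comp_mul_left (fun y => ‖W₁ y‖) A]
    rw [smul_eq_mul, abs_of_pos (inv_pos.mpr hA0)]
  refine ⟨-(((A : ℝ) : ℂ) * ∫ t, G b t), ?_, ?_⟩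
  · rw [norm_neg, norm_mul, Complex.norm_real, Real.norm_eq_abs, abs_of_pos hA0]
    have h1 : ‖∫ t, G b t‖ ≤ ∫ t, ‖G b t‖ := norm_integral_le_integral_norm _
    have h2 : (∫ t, ‖G b t‖) ≤ ∫ t, c₁ * Cf * ‖W₁ (A * (t - b))‖ := by
      apply integral_mono hG_int.norm (hint1.const_mul _)
      intro t
      show ‖G b t‖ ≤ c₁ * Cf * ‖W₁ (A * (t - b))‖
      rw [hnormG b t]
      calc c₁ * ‖W₁ (A * (t - b))‖ * ‖f t‖ ≤ c₁ * ‖W₁ (A * (t - b))‖ * Cf :=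
            mul_le_mul_of_nonneg_left (hfb t) (by positivity)
        _ = c₁ * Cf * ‖W₁ (A * (t - b))‖ := by ring
    have h3 : (∫ t, c₁ * Cf * ‖W₁ (A * (t - b))‖) = c₁ * Cf * (A⁻¹ * ∫ y : ℝ, ‖W₁ y‖) := by
      rw [integral_const_mul, hI1eq]
    have h4 : (∫ y : ℝ, ‖W₁ y‖) = ∫ y : ℝ, ‖deriv (⇑W₀) y‖ := by
      simp only [hW₁_apply]
    have h5 : A * ‖∫ t, G b t‖ ≤ A * (c₁ * Cf * (A⁻¹ * ∫ y : ℝ, ‖W₁ y‖)) := by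
      apply mul_le_mul_of_nonneg_left _ hA0.le
      linarith [h1, h2, h3.le, h3.ge]
    calc A * ‖∫ t, G b t‖ ≤ A * (c₁ * Cf * (A⁻¹ * ∫ y : ℝ, ‖W₁ y‖)) := h5
      _ = c₁ * (∫ y : ℝ, ‖W₁ y‖) * Cf := by field_simp
      _ = c₁ * (∫ y : ℝ, ‖deriv (⇑W₀) y‖) * Cf := by rw [h4]
  · have hWPT_eq : (fun b' => WPT (⇑W₀) s f a b') = fun x => ∫ t, F x t := by
      funext x
      rfl
    rw [hWPT_eq]
    have hval : (∫ t, F' b t)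
        = 2 * Real.pi * a * Complex.I * (∫ t, F b t) + -(((A : ℝ) : ℂ) * ∫ t, G b t) := by
      rw [hF'_def]
      simp only []
      rw [integral_sub (hF_int.const_mul _) (hG_int.const_mul _),
        integral_const_mul, integral_const_mul]
      ring
    have := main.2
    rw [hval] at this
    convert this using 2
    all_goals rfl

set_option maxHeartbeats 8000000 in
/-- Theorem 3.7 (ii) of the paper: on `R_ε ∩ Z_{n,k}` the instantaneous
frequency information function `v_f` approximates `nN_kφ_k′(b)` with relative error `O(√ε)`. -/
theorem sswpt_instantaneous_frequency_estimate
    (d s M : ℝ) (K : ℕ) (hd : 0 < d) (hd1 : d ≤ 1)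
    (hs : 1 / 2 < s) (hs1 : s < 1) (hM : 1 ≤ M) (hK : 1 ≤ K)
    (w : ℝ → ℂ) (hw : IsMotherWavePacket d w) :
    ∃ C : ℝ, 0 < C ∧
      ∀ ε : ℝ, ε ∈ Set.Ioo (0 : ℝ) 1 → ∃ N₀ : ℝ, 0 < N₀ ∧
        ∀ N : ℝ, N₀ < N →
          ∀ (f : ℝ → ℂ) (α : Fin K → ℝ → ℝ) (sh : Fin K → ℝ → ℂ)
            (c : Fin K → ℤ → ℂ) (φ : Fin K → ℝ → ℝ) (Nk : Fin K → ℝ),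
            IsGF d s M N K f α sh c φ Nk →
            ∀ (k : Fin K) (n : ℤ), c k n ≠ 0 →
              ∀ a b : ℝ, (a, b) ∈ Rset w s f ε ∩ Zset d s (Nk k) (φ k) n →
                ‖vIF w s f a b - (((n : ℝ) * Nk k * deriv (φ k) b : ℝ) : ℂ)‖
                  ≤ C * Real.sqrt ε * |(n : ℝ) * Nk k * deriv (φ k) b| := by
  obtain ⟨W₀, hW₀⟩ := hw.schwartz
  have hw_eq : w = ⇑W₀ := funext fun t => (hW₀ t).symm
  subst hw_eq
  have hM0 : (0:ℝ) < M := lt_of_lt_of_le one_pos hM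
  have hs0 : (0:ℝ) < s := by linarith only [hs]
  have h1s : (0:ℝ) < 1 - s := by linarith only [hs1]
  set I1 : ℝ := ∫ t : ℝ, ‖deriv (⇑W₀) t‖ with hI1_def
  have hI1_nonneg : 0 ≤ I1 := integral_nonneg fun t => norm_nonneg _
  clear_value I1
  set CB : ℝ := I1 * ((K:ℝ) * M ^ 2) with hCB_def
  clear_value CB
  have hCB0 : 0 ≤ CB := by
    rw [hCB_def]
    exact mul_nonneg hI1_nonneg (by positivity)
  refine ⟨1, one_pos, ?_⟩
  intro ε hε
  obtain ⟨hε0, hε1⟩ := hε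
  set e : ℝ := Real.sqrt ε with he_def
  clear_value e
  have he0 : 0 < e := by rw [he_def]; exact Real.sqrt_pos.mpr hε0
  have he1 : e ≤ 1 := by rw [he_def]; exact Real.sqrt_le_one.mpr hε1.le
  have he_sq : e * e = ε := by rw [he_def]; exact Real.mul_self_sqrt hε0.le
  set R : ℝ := 2 * (CB + 2) / ε + 2 with hR_def
  clear_value R
  have hR2 : 2 ≤ R := by
    have h0 : 0 < 2 * (CB + 2) / ε := div_pos (by linarith only [hCB0]) hε0
    rw [hR_def]
    linarith only [h0]
  have hRpos : (0:ℝ) < R := by linarith only [hR2]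
  refine ⟨2 * M * R ^ (1 / (1 - s)),
    mul_pos (mul_pos two_pos hM0) (Real.rpow_pos_of_pos hRpos _), ?_⟩
  intro N hN f α sh c φ Nk hGF k n hn a b hmem
  simp only [Rset, Zset, Set.mem_inter_iff, Set.mem_setOf_eq] at hmem
  obtain ⟨⟨ha1, hWlow⟩, -, haT⟩ := hmem
  have hapos : (0:ℝ) < |a| := lt_of_lt_of_le one_pos ha1
  have hgimt := hGF.gimt k
  have hφlb := hgimt.φ'_lb b
  have hφub := hgimt.φ'_ub b
  have hφpos : 0 < deriv (φ k) b := lt_of_lt_of_le (one_div_pos.mpr hM0) hφlb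
  have hn0 : n ≠ 0 := by
    intro h
    exact hn (by rw [h]; exact hgimt.shape.zero_mean)
  have hn1 : (1:ℝ) ≤ |(n:ℝ)| := by
    rw [← Int.cast_abs]
    exact_mod_cast Int.one_le_abs hn0
  have hNpos : (0:ℝ) < N :=
    lt_trans (mul_pos (mul_pos two_pos hM0) (Real.rpow_pos_of_pos hRpos _)) hN
  have hNk : N ≤ Nk k := hGF.Nk_ge k
  have hNkpos : 0 < Nk k := lt_of_lt_of_le hNpos hNk
  set T : ℝ := (n:ℝ) * Nk k * deriv (φ k) b with hT_def
  clear_value T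
  have hTabs : |T| = |(n:ℝ)| * (Nk k * deriv (φ k) b) := by
    rw [hT_def, abs_mul, abs_mul, abs_of_pos hNkpos, abs_of_pos hφpos, mul_assoc]
  have hT_lb : N / M ≤ |T| := by
    rw [hTabs]
    have h1 : N * (1 / M) ≤ Nk k * deriv (φ k) b :=
      mul_le_mul hNk hφlb (one_div_pos.mpr hM0).le hNkpos.le
    have h2 : Nk k * deriv (φ k) b ≤ |(n:ℝ)| * (Nk k * deriv (φ k) b) :=
      le_mul_of_one_le_left (mul_pos hNkpos hφpos).le hn1
    have h3 : N / M = N * (1 / M) := by ring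
    linarith only [h1, h2, h3]
  have hAs_pos : 0 < |a| ^ s := Real.rpow_pos_of_pos hapos s
  have hAs_le : |a| ^ s ≤ |a| := by
    calc |a| ^ s ≤ |a| ^ (1:ℝ) := Real.rpow_le_rpow_of_exponent_le ha1 (by linarith only [hs1])
      _ = |a| := Real.rpow_one _
  have hT2a : |T| ≤ 2 * |a| := by
    have h1 : |T| - |a| ≤ |a - T| := by
      rw [abs_sub_comm]
      exact abs_sub_abs_le_abs_sub T a
    have h2 : d * |a| ^ s ≤ |a| ^ s := mul_le_of_le_one_left hAs_pos.le hd1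
    linarith only [h1, h2, haT, hAs_le]
  have haN : N / (2 * M) ≤ |a| := by
    have h1 : N / M ≤ 2 * |a| := le_trans hT_lb hT2a
    have h2 : N / (2 * M) = (N / M) / 2 := by ring
    linarith only [h1, h2]
  have hQ : R ^ (1 / (1 - s)) < |a| := by
    have h1 : R ^ (1 / (1 - s)) < N / (2 * M) := by
      rw [lt_div_iff₀ (by linarith only [hM0] : (0:ℝ) < 2 * M)]
      linarith only [hN]
    linarith only [h1, haN]
  have haR : R ≤ |a| ^ (1 - s) := by
    have h := Real.rpow_le_rpow (Real.rpow_nonneg hRpos.le _) hQ.le h1s.le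
    rwa [← Real.rpow_mul hRpos.le, one_div, inv_mul_cancel₀ h1s.ne', Real.rpow_one] at h
  have hsplit_a : |a| ^ s * |a| ^ (1 - s) = |a| := by
    rw [← Real.rpow_add hapos]
    norm_num
  have h2R : (2:ℝ) ≤ |a| ^ (1 - s) := le_trans hR2 haR
  have hAs_half : |a| ^ s ≤ |a| / 2 := by
    have h3 : 2 * |a| ^ s ≤ |a| ^ (1 - s) * |a| ^ s := mul_le_mul_of_nonneg_right h2R hAs_pos.le
    have h4 : |a| ^ (1 - s) * |a| ^ s = |a| := by rw [mul_comm]; exact hsplit_a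
    linarith only [h3, h4]
  have hT_ge : |a| / 2 ≤ |T| := by
    have h1 : |a| - |T| ≤ |a - T| := abs_sub_abs_le_abs_sub a T
    have h2 : d * |a| ^ s ≤ |a| ^ s := mul_le_of_le_one_left hAs_pos.le hd1
    linarith only [h1, h2, haT, hAs_half]
  -- continuity and boundedness of f
  have hsh_cont : ∀ j : Fin K, Continuous (sh j) := by
    intro j
    apply ((hGF.gimt j).shape.unif_conv).continuous
    refine Filter.Frequently.of_forall fun m => ?_
    apply continuous_finset_sum
    intro i _
    apply Continuous.mul continuous_const
    apply Complex.continuous_exp.comp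
    exact (Complex.continuous_ofReal.comp (continuous_const.mul continuous_id)).mul
      continuous_const
  have hf_cont : Continuous f := by
    have hfe : f = fun t => ∑ j, ((α j t : ℝ) : ℂ) * sh j (2 * Real.pi * Nk j * φ j t) :=
      funext hGF.sum_eq
    rw [hfe]
    apply continuous_finset_sum
    intro j _
    exact (Complex.continuous_ofReal.comp (hGF.gimt j).α_smooth.continuous).mul
      ((hsh_cont j).comp (continuous_const.mul (hGF.gimt j).φ_smooth.continuous))
  have hfb : ∀ t, ‖f t‖ ≤ (K:ℝ) * M ^ 2 := by
    intro t
    rw [hGF.sum_eq t]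
    have hterm : ∀ j : Fin K,
        ‖((α j t : ℝ) : ℂ) * sh j (2 * Real.pi * Nk j * φ j t)‖ ≤ M * M := by
      intro j
      rw [norm_mul, Complex.norm_real, Real.norm_eq_abs]
      have hα0 : 0 < α j t := lt_of_lt_of_le (one_div_pos.mpr hM0) ((hGF.gimt j).α_lb t)
      have h1 : |α j t| ≤ M := by
        rw [abs_of_pos hα0]
        exact (hGF.gimt j).α_ub t
      have h2 : ‖sh j (2 * Real.pi * Nk j * φ j t)‖ ≤ M := by
        exact (hGF.gimt j).shape.linf _
      exact mul_le_mul h1 h2 (norm_nonneg _) hM0.le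
    calc ‖∑ j, ((α j t : ℝ) : ℂ) * sh j (2 * Real.pi * Nk j * φ j t)‖
        ≤ ∑ j : Fin K, M * M :=
          le_trans (norm_sum_le _ _) (Finset.sum_le_sum fun j _ => hterm j)
      _ = (K:ℝ) * M ^ 2 := by
        rw [Finset.sum_const, Finset.card_univ, Fintype.card_fin, nsmul_eq_mul]
        ring
  -- the derivative of the wave packet transform
  obtain ⟨E, hE_bound, hE_deriv⟩ := WPT_hasDerivAt W₀ s hs0 f hf_cont ((K:ℝ) * M ^ 2)
    (by positivity) hfb a ha1 b
  have hE_bound' : ‖E‖ ≤ |a| ^ (s / 2) * I1 * ((K:ℝ) * M ^ 2) := by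
    rw [hI1_def]
    exact hE_bound
  set Wv : ℂ := WPT (⇑W₀) s f a b with hWv_def
  clear_value Wv
  have hWnorm : |a| ^ (-(s / 2)) * e ≤ ‖Wv‖ := by
    rw [he_def]
    exact hWlow
  have hWpos : 0 < ‖Wv‖ :=
    lt_of_lt_of_le (mul_pos (Real.rpow_pos_of_pos hapos _) he0) hWnorm
  have hWne : Wv ≠ 0 := norm_pos_iff.mp hWpos
  have hd_eq : deriv (fun b' => WPT (⇑W₀) s f a b') b
      = 2 * Real.pi * a * Complex.I * Wv + E := hE_deriv.deriv
  have hπne : ((Real.pi : ℝ) : ℂ) ≠ 0 := Complex.ofReal_ne_zero.mpr Real.pi_ne_zero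
  have hvIF : vIF (⇑W₀) s f a b - (a:ℂ) = E / (2 * Real.pi * Complex.I * Wv) := by
    unfold vIF
    rw [hd_eq, ← hWv_def]
    field_simp
    ring
  have hnormD : ‖2 * (Real.pi:ℝ) * Complex.I * Wv‖ = 2 * Real.pi * ‖Wv‖ := by
    simp only [norm_mul, Complex.norm_I, Complex.norm_real, Real.norm_eq_abs,
      Complex.norm_two, mul_one]
    rw [abs_of_pos Real.pi_pos]
  have hstep1 : ‖vIF (⇑W₀) s f a b - (a:ℂ)‖ ≤ |a| ^ s * CB / (2 * Real.pi * e) := by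
    rw [hvIF, norm_div, hnormD]
    have h1 : ‖E‖ / (2 * Real.pi * ‖Wv‖)
        ≤ (|a| ^ (s / 2) * I1 * ((K:ℝ) * M ^ 2)) / (2 * Real.pi * (|a| ^ (-(s / 2)) * e)) := by
      apply div_le_div₀
        (mul_nonneg (mul_nonneg (Real.rpow_nonneg (abs_nonneg a) _) hI1_nonneg) (by positivity))
        hE_bound'
        (mul_pos (mul_pos two_pos Real.pi_pos) (mul_pos (Real.rpow_pos_of_pos hapos _) he0))
      apply mul_le_mul_of_nonneg_left hWnorm (by positivity)
    have hXX : |a| ^ (s / 2) * |a| ^ (s / 2) = |a| ^ s := by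
      rw [← Real.rpow_add hapos]
      congr 1
      ring
    have hneg : |a| ^ (-(s / 2)) = (|a| ^ (s / 2))⁻¹ := Real.rpow_neg hapos.le _
    have hx : (0:ℝ) < |a| ^ (s / 2) := Real.rpow_pos_of_pos hapos _
    have heq : (|a| ^ (s / 2) * I1 * ((K:ℝ) * M ^ 2)) / (2 * Real.pi * (|a| ^ (-(s / 2)) * e))
        = |a| ^ s * CB / (2 * Real.pi * e) := by
      rw [hneg, hCB_def, ← hXX]
      field_simp
    linarith only [h1, heq.le, heq.ge]
  have htri : ‖vIF (⇑W₀) s f a b - ((T:ℝ):ℂ)‖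
      ≤ ‖vIF (⇑W₀) s f a b - (a:ℂ)‖ + |a - T| := by
    have hsplit : vIF (⇑W₀) s f a b - ((T:ℝ):ℂ)
        = (vIF (⇑W₀) s f a b - (a:ℂ)) + (((a - T : ℝ) : ℝ):ℂ) := by
      push_cast
      ring
    rw [hsplit]
    refine le_trans (norm_add_le _ _) ?_
    rw [Complex.norm_real, Real.norm_eq_abs]
  have key2 : CB / (2 * Real.pi * e) + d ≤ e * |a| ^ (1 - s) / 2 := by
    have hpi1 : (1:ℝ) ≤ 2 * Real.pi := by linarith only [Real.pi_gt_three]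
    have ha' : CB / (2 * Real.pi * e) ≤ CB / e := by
      have h := div_le_self (div_nonneg hCB0 he0.le) hpi1
      calc CB / (2 * Real.pi * e) = CB / e / (2 * Real.pi) := by
            rw [div_div]
            ring_nf
        _ ≤ CB / e := h
    have hd' : d ≤ 1 / e := by
      rw [le_div_iff₀ he0]
      exact mul_le_one₀ hd1 he0.le he1
    have hgoal1 : CB / (2 * Real.pi * e) + d ≤ (CB + 1) / e := by
      calc CB / (2 * Real.pi * e) + d ≤ CB / e + 1 / e := add_le_add ha' hd'
        _ = (CB + 1) / e := by ring
    have hfin : (CB + 1) / e ≤ (CB + 2) / e := by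
      exact (div_le_div_iff_of_pos_right he0).mpr (by linarith)
    have hhalf : e * R / 2 = (CB + 2) / e + e := by
      rw [hR_def, ← he_sq]
      field_simp
    have hR_le : e * R / 2 ≤ e * |a| ^ (1 - s) / 2 := by
      have h5 := mul_le_mul_of_nonneg_left haR he0.le
      linarith only [h5]
    linarith only [hgoal1, hfin, hhalf.le, hhalf.ge, hR_le, he0]
  have key : |a| ^ s * (CB / (2 * Real.pi * e) + d) ≤ e * |T| := by
    calc |a| ^ s * (CB / (2 * Real.pi * e) + d)
        ≤ |a| ^ s * (e * |a| ^ (1 - s) / 2) := mul_le_mul_of_nonneg_left key2 hAs_pos.le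
      _ = e * (|a| ^ s * |a| ^ (1 - s)) / 2 := by ring
      _ = e * |a| / 2 := by rw [hsplit_a]
      _ = e * (|a| / 2) := by ring
      _ ≤ e * |T| := mul_le_mul_of_nonneg_left hT_ge he0.le
  calc ‖vIF (⇑W₀) s f a b - ((T:ℝ):ℂ)‖
      ≤ ‖vIF (⇑W₀) s f a b - (a:ℂ)‖ + |a - T| := htri
    _ ≤ |a| ^ s * CB / (2 * Real.pi * e) + d * |a| ^ s := add_le_add hstep1 haT
    _ = |a| ^ s * (CB / (2 * Real.pi * e) + d) := by ring
    _ ≤ e * |T| := key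
    _ = 1 * e * |T| := by ring
end
end

section
/- Let α(t)s(2πN₀φ(t)) be a general intrinsic mode type function of type (M₀,N₀) with N₀ ≥ 1. Suppose s has nonzero Fourier coefficients ŝ(n₁),…,ŝ(n_L) (the n_i nonzero integers), with ŝ(n) = 0 whenever |n| < |n₁|, and gcd(|n₁|,…,|n_L|) = 1. Define ψ_i(t) = n_i N₀ φ′(t) for 1 ≤ i ≤ L, let M = M₀ · inf_t |ψ₁(t)|, and for integers 1 ≤ n ≤ M set F(n) = (1/(L−1)) Σ_{i=2}^{L} ‖ nψ_i/ψ₁ − ⌊ nψ_i/ψ₁ + 0.5 ⌋ ‖²_{L²([0,1])}. Let n₀ = min( argmin_{1≤n≤M} F(n) ). Then n₀ = |n₁| and N₀φ′(t) = |ψ₁(t)|/n₀ for all t ∈ ℝ. -/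
open MeasureTheory Filter Set

noncomputable section

/-- `ψ_i(t) = n_i N₀ φ′(t)`. -/
def psi (N₀ : ℝ) (φ : ℝ → ℝ) (m : ℤ) (t : ℝ) : ℝ := (m : ℝ) * N₀ * deriv φ t

/-- `F(m) = (1/(L−1)) Σ_{i≠i₀} ‖ mψ_i/ψ_{i₀} − ⌊mψ_i/ψ_{i₀} + 0.5⌋ ‖²_{L²([0,1])}`. -/
def Ffun (N₀ : ℝ) (φ : ℝ → ℝ) {L : ℕ} (n : Fin L → ℤ) (i₀ : Fin L) (m : ℤ) : ℝ :=
  (1 / ((L : ℝ) - 1)) * ∑ i ∈ Finset.univ.filter (fun i : Fin L => i ≠ i₀),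
    ∫ t in (0 : ℝ)..1,
      ((m : ℝ) * psi N₀ φ (n i) t / psi N₀ φ (n i₀) t -
        (⌊(m : ℝ) * psi N₀ φ (n i) t / psi N₀ φ (n i₀) t + 1 / 2⌋ : ℤ)) ^ 2

/-- Theorem 3.10 of the paper: identification of the instantaneous frequency
`N₀φ′` via the least-squares rounding functional `F`.  Here `n ⟨0,hL⟩` plays the role of `n₁`
and `n₀ = min (argmin_{1≤m≤M} F(m))`. -/
theorem instantaneous_frequency_identification_l2
    (M₀ N₀ : ℝ) (hM₀ : 1 ≤ M₀) (hN₀ : 1 ≤ N₀)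
    (α : ℝ → ℝ) (sh : ℝ → ℂ) (c : ℤ → ℂ) (φ : ℝ → ℝ)
    (hGIMT : IsGIMT M₀ N₀ α sh c φ)
    (L : ℕ) (hL : 0 < L) (n : Fin L → ℤ)
    (hn0 : ∀ i, n i ≠ 0)
    (hnz : ∀ i, c (n i) ≠ 0)
    (hlow : ∀ m : ℤ, |m| < |n ⟨0, hL⟩| → c m = 0)
    (hgcd : Finset.univ.gcd (fun i => (n i).natAbs) = 1) :
    IsLeast
      {m : ℤ | 1 ≤ m ∧ (m : ℝ) ≤ M₀ * (⨅ t : ℝ, |psi N₀ φ (n ⟨0, hL⟩) t|) ∧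
        ∀ m' : ℤ, 1 ≤ m' → (m' : ℝ) ≤ M₀ * (⨅ t : ℝ, |psi N₀ φ (n ⟨0, hL⟩) t|) →
          Ffun N₀ φ n ⟨0, hL⟩ m ≤ Ffun N₀ φ n ⟨0, hL⟩ m'}
      ((n ⟨0, hL⟩).natAbs : ℤ)
    ∧
    ∀ t : ℝ, N₀ * deriv φ t = |psi N₀ φ (n ⟨0, hL⟩) t| / ((n ⟨0, hL⟩).natAbs : ℝ) := by
  have hM₀pos : (0:ℝ) < M₀ := lt_of_lt_of_le one_pos hM₀
  have hN₀pos : (0:ℝ) < N₀ := lt_of_lt_of_le one_pos hN₀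
  set i₀ : Fin L := ⟨0, hL⟩ with hi₀
  set n₁ : ℤ := n i₀ with hn₁def
  have hn₁ : n₁ ≠ 0 := hn0 i₀
  have hn₁R : ((n₁ : ℝ)) ≠ 0 := Int.cast_ne_zero.mpr hn₁
  have hnatpos : 0 < n₁.natAbs := Int.natAbs_pos.mpr hn₁
  have hnatR : ((n₁.natAbs : ℝ)) ≠ 0 := by positivity
  have hφ'pos : ∀ t, 0 < deriv φ t := fun t =>
    lt_of_lt_of_le (by positivity) (hGIMT.φ'_lb t)
  have hcpos : ∀ t, 0 < N₀ * deriv φ t := fun t => mul_pos hN₀pos (hφ'pos t)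
  have habs : ∀ t, |psi N₀ φ n₁ t| = (n₁.natAbs : ℝ) * (N₀ * deriv φ t) := by
    intro t
    rw [psi, mul_assoc, abs_mul, abs_of_pos (hcpos t), Nat.cast_natAbs, Int.cast_abs]
  -- lower bound for the infimum
  have hInf : ∀ t, ((n₁.natAbs : ℝ)) / M₀ ≤ |psi N₀ φ n₁ t| := by
    intro t
    rw [habs t]
    have h1 : (1:ℝ)/M₀ ≤ deriv φ t := hGIMT.φ'_lb t
    have h2 : deriv φ t ≤ N₀ * deriv φ t :=
      le_mul_of_one_le_left (hφ'pos t).le hN₀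
    have h3 : (1:ℝ) ≤ (n₁.natAbs : ℝ) := by exact_mod_cast hnatpos
    calc ((n₁.natAbs : ℝ)) / M₀ = (n₁.natAbs : ℝ) * (1/M₀) := by ring
    _ ≤ (n₁.natAbs : ℝ) * (N₀ * deriv φ t) := by
        apply mul_le_mul_of_nonneg_left (by linarith) (by positivity)
  have hn₀le : (((n₁.natAbs : ℤ)) : ℝ) ≤ M₀ * ⨅ t : ℝ, |psi N₀ φ n₁ t| := by
    have hci : ((n₁.natAbs : ℝ)) / M₀ ≤ ⨅ t : ℝ, |psi N₀ φ n₁ t| := le_ciInf hInf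
    have := mul_le_mul_of_nonneg_left hci hM₀pos.le
    calc (((n₁.natAbs : ℤ)) : ℝ) = M₀ * (((n₁.natAbs : ℝ)) / M₀) := by
          rw [mul_comm, div_mul_cancel₀ _ hM₀pos.ne', Int.cast_natCast]
    _ ≤ M₀ * ⨅ t : ℝ, |psi N₀ φ n₁ t| := this
  have hn₀ge1 : (1:ℤ) ≤ ((n₁.natAbs : ℤ)) := by exact_mod_cast hnatpos
  -- the ratio is constant in t
  have hratio : ∀ (m : ℤ) (i : Fin L) (t : ℝ),
      (m:ℝ) * psi N₀ φ (n i) t / psi N₀ φ n₁ t = (m:ℝ) * (n i : ℝ) / (n₁ : ℝ) := by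
    intro m i t
    have hd : deriv φ t ≠ 0 := (hφ'pos t).ne'
    have hN : N₀ ≠ 0 := hN₀pos.ne'
    simp only [psi]
    field_simp
  -- closed form for Ffun
  have hFfun : ∀ m : ℤ, Ffun N₀ φ n i₀ m =
      (1/((L:ℝ)-1)) * ∑ i ∈ Finset.univ.filter (fun i : Fin L => i ≠ i₀),
        ((m:ℝ) * (n i:ℝ)/(n₁:ℝ) - (⌊(m:ℝ)*(n i:ℝ)/(n₁:ℝ) + 1/2⌋ : ℤ))^2 := by
    intro m
    rw [Ffun]
    congr 1
    refine Finset.sum_congr rfl (fun i _ => ?_)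
    have heq : ∀ t ∈ Set.uIcc (0:ℝ) 1,
        (fun t : ℝ => ((m : ℝ) * psi N₀ φ (n i) t / psi N₀ φ (n i₀) t -
          (⌊(m : ℝ) * psi N₀ φ (n i) t / psi N₀ φ (n i₀) t + 1 / 2⌋ : ℤ)) ^ 2) t =
        (fun _ : ℝ => ((m:ℝ) * (n i:ℝ)/(n₁:ℝ) -
          (⌊(m:ℝ)*(n i:ℝ)/(n₁:ℝ) + 1/2⌋ : ℤ))^2) t := by
      intro t _
      simp only [← hn₁def, hratio m i t]
    rw [intervalIntegral.integral_congr heq, intervalIntegral.integral_const]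
    simp
  -- F is nonnegative
  have hLR : (1:ℝ) ≤ (L:ℝ) := by exact_mod_cast hL
  have hFnonneg : ∀ m : ℤ, 0 ≤ Ffun N₀ φ n i₀ m := by
    intro m
    rw [hFfun]
    exact mul_nonneg (div_nonneg one_pos.le (by linarith))
      (Finset.sum_nonneg fun i _ => sq_nonneg _)
  -- F vanishes at n₀ = |n₁|
  have hFzero : Ffun N₀ φ n i₀ ((n₁.natAbs : ℤ)) = 0 := by
    rw [hFfun]
    rw [mul_eq_zero]
    right
    apply Finset.sum_eq_zero
    intro i _
    obtain ⟨k, hk⟩ : n₁ ∣ ((n₁.natAbs : ℤ)) * n i :=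
      Dvd.dvd.mul_right (Int.dvd_natAbs.mpr dvd_rfl) _
    have hkR : (((n₁.natAbs : ℤ)):ℝ) * ((n i):ℝ) / (n₁:ℝ) = (k:ℝ) := by
      rw [div_eq_iff hn₁R]
      exact_mod_cast hk.trans (mul_comm n₁ k)
    rw [hkR]
    have : ⌊(k:ℝ) + 1/2⌋ = k := by
      rw [Int.floor_intCast_add]
      norm_num
    rw [this]
    simp
  -- membership
  have hmem : ((n₁.natAbs : ℤ)) ∈
      {m : ℤ | 1 ≤ m ∧ (m : ℝ) ≤ M₀ * (⨅ t : ℝ, |psi N₀ φ n₁ t|) ∧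
        ∀ m' : ℤ, 1 ≤ m' → (m' : ℝ) ≤ M₀ * (⨅ t : ℝ, |psi N₀ φ n₁ t|) →
          Ffun N₀ φ n i₀ ((n₁.natAbs : ℤ)) ≤ Ffun N₀ φ n i₀ m'} := by
    refine ⟨hn₀ge1, hn₀le, fun m' _ _ => ?_⟩
    rw [hFzero]; exact hFnonneg m'
  constructor
  · constructor
    · exact hmem
    · rintro m ⟨hm1, hmle, hmin⟩
      have hFm0 : Ffun N₀ φ n i₀ m = 0 := by
        have h := hmin ((n₁.natAbs : ℤ)) hn₀ge1 hn₀le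
        rw [hFzero] at h
        exact le_antisymm h (hFnonneg m)
      have hdvd : ∀ i : Fin L, n₁ ∣ m * n i := by
        intro i
        by_cases hii : i = i₀
        · rw [hii, ← hn₁def]
          exact dvd_mul_left n₁ m
        · have hL2 : 1 < L := by
            by_contra h
            push_neg at h
            exact hii (Fin.ext (by omega))
          have hc0 : (0:ℝ) < 1/((L:ℝ)-1) := by
            have h2 : (2:ℝ) ≤ (L:ℝ) := by exact_mod_cast hL2
            have : (0:ℝ) < (L:ℝ) - 1 := by linarith
            positivity
          rw [hFfun] at hFm0
          have hsum0 : ∑ i ∈ Finset.univ.filter (fun i : Fin L => i ≠ i₀),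
              ((m:ℝ) * (n i:ℝ)/(n₁:ℝ) - (⌊(m:ℝ)*(n i:ℝ)/(n₁:ℝ) + 1/2⌋ : ℤ))^2 = 0 := by
            rcases mul_eq_zero.mp hFm0 with h | h
            · exact absurd h hc0.ne'
            · exact h
          have hterm : ((m:ℝ) * (n i:ℝ)/(n₁:ℝ) -
              (⌊(m:ℝ)*(n i:ℝ)/(n₁:ℝ) + 1/2⌋ : ℤ))^2 = 0 := by
            have := (Finset.sum_eq_zero_iff_of_nonneg
              (fun j _ => sq_nonneg _)).mp hsum0 i (by simp [hii])
            exact this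
          have heq : (m:ℝ) * (n i:ℝ)/(n₁:ℝ) =
              ((⌊(m:ℝ)*(n i:ℝ)/(n₁:ℝ) + 1/2⌋ : ℤ) : ℝ) := by
            have := pow_eq_zero_iff (n := 2) (by norm_num) |>.mp hterm
            linarith
          set k : ℤ := ⌊(m:ℝ)*(n i:ℝ)/(n₁:ℝ) + 1/2⌋ with hkdef
          have : ((m * n i : ℤ) : ℝ) = ((k * n₁ : ℤ) : ℝ) := by
            push_cast
            rw [← heq]
            field_simp
          have hint : m * n i = k * n₁ := by exact_mod_cast this
          exact ⟨k, by linarith [hint]⟩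
      have hdvdnat : n₁.natAbs ∣ m.natAbs := by
        have h1 : n₁.natAbs ∣ Finset.univ.gcd (fun i : Fin L => (m * n i).natAbs) :=
          Finset.dvd_gcd (fun i _ => Int.natAbs_dvd_natAbs.mpr (hdvd i))
        have h2 : Finset.univ.gcd (fun i : Fin L => (m * n i).natAbs) =
            m.natAbs * Finset.univ.gcd (fun i : Fin L => (n i).natAbs) := by
          simp_rw [Int.natAbs_mul]
          rw [Finset.gcd_mul_left, normalize_eq]
        rw [h2, hgcd, mul_one] at h1
        exact h1
      have : n₁.natAbs ≤ m.natAbs := Nat.le_of_dvd (by omega) hdvdnat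
      omega
  · intro t
    rw [habs t, mul_div_cancel_left₀ _ hnatR]
end
end

section
/- Let d ∈ (0,1], s ∈ [1/2,1) and N > 2. Then: (a) there is a unique a* ∈ [1,N) satisfying a* + d·(a*)^s = N, and N/2 < a* < N, so λ₀ := (2a* − N)/N ∈ (0,1); (b) for every λ with 1/N ≤ λ < 1, the sets Z₁ = {a ≥ 1 : |a − N| ≤ d·a^s} and Z_λ = {a ≥ 1 : |a − λN| ≤ d·a^s} are disjoint if and only if λ < λ₀. -/
/-!
Both `f a = a + d a^s` and `g a = a - d a^s` are nondecreasing on `[1, ∞)` (the latter because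
`d s ≤ 1`), so `|a - c| ≤ d a^s` says `g a ≤ c ≤ f a` and `Z_c` is an interval whose left end
moves right with `c`. `Z₁` starts at the root `a*` of `f a* = N`; since `λN < N`, the set `Z_λ`
meets `Z₁` exactly when it reaches `a*`, i.e. when `g a* = 2a* - N ≤ λN`. Finally `N/2 < a*`
because `d (a*)^s < a*` for `s < 1`.
-/

open Set

theorem disjoint_setOf_between_iff_lt {α β : Type*} [LinearOrder α] [LinearOrder β]
    {S : Set α} {f g : α → β} (hf : StrictMonoOn f S) (hg : MonotoneOn g S)
    {x : α} (hx : x ∈ S) {N c : β} (hfx : f x = N) (hcN : c ≤ N) :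
    Disjoint {a | a ∈ S ∧ g a ≤ N ∧ N ≤ f a} {a | a ∈ S ∧ g a ≤ c ∧ c ≤ f a} ↔
      c < g x := by
  constructor
  · intro hdisj
    by_contra! hgx
    exact Set.disjoint_left.1 hdisj ⟨hx, hgx.trans hcN, hfx.ge⟩ ⟨hx, hgx, hfx ▸ hcN⟩
  · intro hcg
    refine Set.disjoint_left.2 fun a ⟨ha, _, hNa⟩ ⟨_, hga, _⟩ => hcg.not_ge ?_
    have hxa : x ≤ a := (hf.le_iff_le hx ha).1 (hfx ▸ hNa)
    exact (hg hx ha hxa).trans hga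

theorem setOf_abs_sub_le_mul_rpow_eq (c d s : ℝ) :
    {a : ℝ | 1 ≤ a ∧ |a - c| ≤ d * a ^ s} =
      {a | a ∈ Ici 1 ∧ a - d * a ^ s ≤ c ∧ c ≤ a + d * a ^ s} := by
  ext a
  simp only [mem_ofPred_eq, mem_Ici, abs_le]
  constructor <;> rintro ⟨h1, h2, h3⟩ <;> exact ⟨h1, by linarith, by linarith⟩

theorem strictMonoOn_add_mul_rpow {d s : ℝ} (hd : 0 ≤ d) (hs : 0 ≤ s) :
    StrictMonoOn (fun a : ℝ => a + d * a ^ s) (Ici 0) :=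
  fun _ ha _ _ hab =>
    add_lt_add_of_lt_of_le hab (mul_le_mul_of_nonneg_left (Real.rpow_le_rpow ha hab.le hs) hd)

theorem monotoneOn_sub_mul_rpow {d s : ℝ} (hs : s ≤ 1) (hds : d * s ≤ 1) :
    MonotoneOn (fun a : ℝ => a - d * a ^ s) (Ici 1) := by
  have hderiv : ∀ x ∈ Ici (1 : ℝ),
      HasDerivAt (fun a : ℝ => a - d * a ^ s) (1 - d * (s * x ^ (s - 1))) x := fun x hx =>
    (hasDerivAt_id x).sub
      ((Real.hasDerivAt_rpow_const (Or.inl (zero_lt_one.trans_le hx).ne')).const_mul d)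
  refine monotoneOn_of_hasDerivWithinAt_nonneg (convex_Ici 1)
    (fun x hx => (hderiv x hx).continuousAt.continuousWithinAt)
    (fun x hx => (hderiv x (interior_subset hx)).hasDerivWithinAt) fun x hx => ?_
  rw [interior_Ici] at hx
  have hpos := Real.rpow_pos_of_pos (zero_lt_one.trans hx) (s - 1)
  have hle := Real.rpow_le_one_of_one_le_of_nonpos hx.le (sub_nonpos.2 hs)
  nlinarith [mul_nonneg (sub_nonneg.2 hds) hpos.le]

theorem exists_add_mul_rpow_eq {d s N : ℝ} (hd : 0 < d) (hN : 1 + d < N) :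
    ∃ a ∈ Ioo 1 N, a + d * a ^ s = N := by
  have hcont : ContinuousOn (fun a : ℝ => a + d * a ^ s) (Icc 1 N) := fun x hx =>
    (continuousAt_id.add (continuousAt_const.mul (Real.continuousAt_rpow_const _ _
      (Or.inl (zero_lt_one.trans_le hx.1).ne')))).continuousWithinAt
  have hfN : N < N + d * N ^ s :=
    lt_add_of_pos_right N (mul_pos hd (Real.rpow_pos_of_pos (by linarith) s))
  exact intermediate_value_Ioo (by linarith) hcont ⟨by simpa using hN, hfN⟩

theorem mul_rpow_lt_self {d s a : ℝ} (hd : d ≤ 1) (hs : s < 1) (ha : 1 < a) : d * a ^ s < a :=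
  calc d * a ^ s ≤ 1 * a ^ s :=
        mul_le_mul_of_nonneg_right hd (Real.rpow_pos_of_pos (by linarith) s).le
    _ < a ^ (1 : ℝ) := by rw [one_mul]; exact Real.rpow_lt_rpow_of_exponent_lt ha hs
    _ = a := Real.rpow_one a

/-- single-scale resolution of the synchrosqueezed wave packet transform with
geometric scaling parameter `s`: (a) there is a unique `a* ∈ [1,N)` with `a* + d(a*)^s = N`,
and `N/2 < a* < N`; (b) with `λ₀ = (2a* − N)/N ∈ (0,1)`, for every `λ ∈ [1/N, 1)` the sets
`Z₁` and `Z_λ` are disjoint iff `λ < λ₀`. -/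
theorem sswpt_single_scale_resolution
    (d s N : ℝ) (hd : 0 < d) (hd1 : d ≤ 1) (hs : 1 / 2 ≤ s) (hs1 : s < 1) (hN : 2 < N) :
    ∃ astar : ℝ,
      (astar ∈ Set.Ico (1 : ℝ) N ∧ astar + d * astar ^ s = N ∧
        ∀ a' ∈ Set.Ico (1 : ℝ) N, a' + d * a' ^ s = N → a' = astar) ∧
      (N / 2 < astar ∧ astar < N) ∧
      ((2 * astar - N) / N ∈ Set.Ioo (0 : ℝ) 1) ∧
      (∀ l : ℝ, 1 / N ≤ l → l < 1 →
        (Disjoint {a : ℝ | 1 ≤ a ∧ |a - N| ≤ d * a ^ s}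
            {a : ℝ | 1 ≤ a ∧ |a - l * N| ≤ d * a ^ s}
          ↔ l < (2 * astar - N) / N)) := by
  have hN0 : 0 < N := by linarith
  have hf := (strictMonoOn_add_mul_rpow (s := s) hd.le (by linarith)).mono
    (Ici_subset_Ici.2 zero_le_one)
  have hg := monotoneOn_sub_mul_rpow (d := d) hs1.le (by nlinarith)
  obtain ⟨astar, ⟨h1a, haN⟩, hfa⟩ := exists_add_mul_rpow_eq (s := s) hd (by linarith)
  have hhalf : N / 2 < astar := by linarith [mul_rpow_lt_self hd1 hs1 h1a]
  refine ⟨astar, ⟨⟨h1a.le, haN⟩, hfa, fun a' ha' hfa' => ?_⟩, ⟨hhalf, haN⟩,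
    ⟨div_pos (by linarith) hN0, (div_lt_one hN0).2 (by linarith)⟩, fun l _ hl1 => ?_⟩
  · exact hf.injOn ha'.1 h1a.le (hfa'.trans hfa.symm)
  · rw [setOf_abs_sub_le_mul_rpow_eq, setOf_abs_sub_le_mul_rpow_eq,
      disjoint_setOf_between_iff_lt hf hg h1a.le hfa (by nlinarith), lt_div_iff₀ hN0]
    constructor <;> intro h <;> linarith
end

section
/- Let M ≥ 1, s ∈ (1/2,1) and b ∈ ℝ. Let w : ℝ → ℂ be a Schwartz function, α ∈ C¹(ℝ) with |α| ≤ M and |α′| ≤ M, and φ ∈ C²(ℝ) with 1/M ≤ φ′ ≤ M and |φ″| ≤ M. Then there exists a constant C = C(M, w, s) such that for every real a ≥ 1 and all positive integers n, N with a ∉ [nN/(2M), 2M·nN], | ∫_ℝ α(a^{−s}x + b) w(x) e^{2πi( nNφ(a^{−s}x + b) − a^{1−s}x )} dx | ≤ C·(nN)^{−(1−s)}. -/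
/-!
One integration by parts. Writing the integrand as `g · e^{iψ}` with `ψ' ≠ 0`, we have
`g e^{iψ} = (g / iψ') (e^{iψ})'`, so the integral equals `-∫ (g / iψ')' e^{iψ}`, which is bounded by
`∫ |g'| / |ψ'| + ∫ |g| |ψ''| / ψ'²`. For the phase `ψ(x) = 2π(nNφ(a^{-s}x + b) - a^{1-s}x)`,
`ψ'(x) = 2π a^{-s}(nNφ'(…) - a)`; since `a` lies outside `[nN/(2M), 2MnN]` and `φ' ∈ [1/M, M]`,
`|nNφ' - a| ≥ max(nN, a)/(2M)`, which gives `|ψ'| ≳ (nN)^{1-s}` and `|ψ''| ≲ ψ'² / (nN)`.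
-/

open MeasureTheory Complex Real

theorem HasDerivAt.comp_mul_add {𝕜 F : Type*} [NontriviallyNormedField 𝕜] [NormedAddCommGroup F]
    [NormedSpace 𝕜 F] {f : 𝕜 → F} {f' : F} {r b x : 𝕜} (hf : HasDerivAt f f' (r * x + b)) :
    HasDerivAt (fun y => f (r * y + b)) (r • f') x := by
  simpa [Function.comp_def] using hf.scomp x (((hasDerivAt_id x).const_mul r).add_const b)

theorem norm_div_mul_I_deriv_le {z z' : ℂ} {p p'' c K G G' : ℝ} (hc : 0 < c)
    (hp : c ≤ |p|) (hp'' : |p''| ≤ K * p ^ 2) (hz : ‖z‖ ≤ G) (hz' : ‖z'‖ ≤ G') :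
    ‖(z' * (p * I) - z * (p'' * I)) / (p * I) ^ 2‖ ≤ G' / c + K * G := by
  have hp0 : 0 < |p| := hc.trans_le hp
  have hpsq : 0 < p ^ 2 := by simpa [sq_abs] using pow_pos hp0 2
  have hK : 0 ≤ K := nonneg_of_mul_nonneg_left ((abs_nonneg _).trans hp'') hpsq
  have e : (z' * (p * I) - z * (p'' * I)) / (p * I) ^ 2 =
      z' / (p * I) - z * p'' * I / (p * I) ^ 2 := by
    field_simp
  have e' : ‖z' / (p * I)‖ = ‖z'‖ / |p| := by simp
  have e'' : ‖z * p'' * I / (p * I) ^ 2‖ = ‖z‖ * (|p''| / p ^ 2) := by simp; ring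
  calc _ ≤ ‖z'‖ / |p| + ‖z‖ * (|p''| / p ^ 2) := by rw [e, ← e', ← e'']; exact norm_sub_le _ _
    _ ≤ G' / c + G * K := add_le_add (div_le_div₀ ((norm_nonneg _).trans hz') hz' hc hp)
        (mul_le_mul hz ((div_le_iff₀ hpsq).2 hp'') (by positivity) ((norm_nonneg _).trans hz))
    _ = G' / c + K * G := by ring

theorem norm_integral_mul_exp_le_of_abs_deriv_ge {g g' : ℝ → ℂ} {ψ ψ' ψ'' G G' : ℝ → ℝ}
    {c K : ℝ} (hg : ∀ x, HasDerivAt g (g' x) x) (hψ : ∀ x, HasDerivAt ψ (ψ' x) x)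
    (hψ' : ∀ x, HasDerivAt ψ' (ψ'' x) x) (hc : 0 < c) (hψ'c : ∀ x, c ≤ |ψ' x|)
    (hψ''K : ∀ x, |ψ'' x| ≤ K * ψ' x ^ 2) (hG : Integrable G) (hG' : Integrable G')
    (hgG : ∀ x, ‖g x‖ ≤ G x) (hg'G' : ∀ x, ‖g' x‖ ≤ G' x) :
    ‖∫ x, g x * cexp (ψ x * I)‖ ≤ (∫ x, G' x) / c + K * ∫ x, G x := by
  have hψ'0 : ∀ x, (ψ' x : ℂ) ≠ 0 := fun x =>
    ofReal_ne_zero.mpr (abs_pos.mp (hc.trans_le (hψ'c x)))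
  set u : ℝ → ℂ := fun x => g x / (ψ' x * I)
  set u' : ℝ → ℂ := fun x => (g' x * (ψ' x * I) - g x * (ψ'' x * I)) / (ψ' x * I) ^ 2
  set v : ℝ → ℂ := fun x => cexp (ψ x * I)
  have hu : ∀ x, HasDerivAt u (u' x) x := fun x =>
    (hg x).div (((hψ' x).ofReal_comp).mul_const I) (mul_ne_zero (hψ'0 x) I_ne_zero)
  have hv : ∀ x, HasDerivAt v (v x * (ψ' x * I)) x := fun x =>
    (((hψ x).ofReal_comp).mul_const I).cexp
  have huv' : ∀ x, u x * (v x * (ψ' x * I)) = g x * v x := fun x => by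
    simp only [u]; field_simp [hψ'0 x]
  have hv1 : ∀ x, ‖v x‖ = 1 := fun x => norm_exp_ofReal_mul_I _
  have hu'G : ∀ x, ‖u' x‖ ≤ G' x / c + K * G x := fun x =>
    norm_div_mul_I_deriv_le hc (hψ'c x) (hψ''K x) (hgG x) (hg'G' x)
  have hgc : Continuous g := continuous_iff_continuousAt.2 fun x => (hg x).continuousAt
  have huc : Continuous u := continuous_iff_continuousAt.2 fun x => (hu x).continuousAt
  have hψc : Continuous ψ := continuous_iff_continuousAt.2 fun x => (hψ x).continuousAt
  have hvc : Continuous v := by fun_prop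
  have hu'm : AEStronglyMeasurable u' :=
    funext (fun x => (hu x).deriv) ▸ (stronglyMeasurable_deriv u).aestronglyMeasurable
  have hgv : Integrable fun x => g x * v x :=
    hG.mono' (hgc.mul hvc).aestronglyMeasurable (.of_forall fun x => by simpa [hv1] using hgG x)
  have hu'v : Integrable (u' * v) :=
    ((hG'.div_const c).add (hG.const_mul K)).mono' (hu'm.mul hvc.aestronglyMeasurable)
      (.of_forall fun x => by simpa [hv1] using hu'G x)
  have huv : Integrable (u * v) :=
    (hG.div_const c).mono' (huc.mul hvc).aestronglyMeasurable (.of_forall fun x => by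
      simpa [hv1, u] using div_le_div₀ ((norm_nonneg _).trans (hgG x)) (hgG x) hc (hψ'c x))
  have hibp := integral_mul_deriv_eq_deriv_mul_of_integrable (fun x _ => hu x) (fun x _ => hv x)
    ((funext huv').symm ▸ hgv : Integrable (u * fun x => v x * (ψ' x * I))) hu'v huv
  simp only [huv'] at hibp
  calc ‖∫ x, g x * cexp (ψ x * I)‖ = ‖∫ x, u' x * v x‖ := (congrArg norm hibp).trans (norm_neg _)
    _ ≤ ∫ x, (G' x / c + K * G x) :=
        norm_integral_le_of_norm_le ((hG'.div_const c).add (hG.const_mul K))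
          (.of_forall fun x => by simpa [hv1] using hu'G x)
    _ = (∫ x, G' x) / c + K * ∫ x, G x := by
        rw [integral_add (hG'.div_const c) (hG.const_mul K), integral_div, integral_const_mul]

section WavePacketPhase

variable {M Q a b d s : ℝ}

theorem max_div_le_abs_mul_sub (hM : 1 ≤ M) (hQ : 0 < Q) (hd : 1 / M ≤ d) (hd' : d ≤ M)
    (ha : a ∉ Set.Icc (Q / (2 * M)) (2 * M * Q)) : max Q a / (2 * M) ≤ |Q * d - a| := by
  have hM0 : 0 < M := by linarith
  rcases not_and_or.mp (Set.mem_Icc.not.mp ha) with ha | ha <;> push Not at ha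
  · have hQd : Q * (1 / M) ≤ Q * d := mul_le_mul_of_nonneg_left hd hQ.le
    rw [mul_one_div] at hQd
    have hQM : Q / (2 * M) ≤ Q / 2 := div_le_div_of_nonneg_left hQ.le two_pos (by linarith)
    rw [max_eq_left (by linarith)]
    have : Q / M = Q / (2 * M) + Q / (2 * M) := by field_simp; ring
    exact (by linarith : Q / (2 * M) ≤ Q * d - a).trans (le_abs_self _)
  · have hQd : Q * d ≤ M * Q := by nlinarith
    have hQa : Q ≤ a := by nlinarith
    rw [max_eq_right hQa, abs_sub_comm, div_le_iff₀ (by positivity)]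
    nlinarith [le_abs_self (a - Q * d)]

theorem rpow_one_sub_le_rpow_neg_mul_max (hQ : 0 < Q) (ha : 0 < a) (hs0 : 0 ≤ s) (hs1 : s ≤ 1) :
    Q ^ (1 - s) ≤ a ^ (-s) * max Q a := by
  have hm : 0 < max Q a := lt_max_of_lt_left hQ
  calc Q ^ (1 - s) ≤ max Q a ^ (1 - s) := rpow_le_rpow hQ.le (le_max_left _ _) (by linarith)
    _ = max Q a ^ (-s) * max Q a := by
        rw [sub_eq_neg_add, rpow_add hm, rpow_one]
    _ ≤ a ^ (-s) * max Q a :=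
        mul_le_mul_of_nonneg_right (rpow_le_rpow_of_nonpos ha (le_max_right _ _)
          (by linarith)) hm.le

theorem le_abs_wave_packet_phase_deriv (hM : 1 ≤ M) (hQ : 0 < Q) (ha : 0 < a) (hs0 : 0 ≤ s)
    (hs1 : s ≤ 1) (hd : 1 / M ≤ d) (hd' : d ≤ M) (haQ : a ∉ Set.Icc (Q / (2 * M)) (2 * M * Q)) :
    π * Q ^ (1 - s) / M ≤ |2 * π * a ^ (-s) * (Q * d - a)| := by
  rw [abs_mul, abs_of_pos (by positivity)]
  calc π * Q ^ (1 - s) / M ≤ π * (a ^ (-s) * max Q a) / M := by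
        gcongr; exact rpow_one_sub_le_rpow_neg_mul_max hQ ha hs0 hs1
    _ = 2 * π * a ^ (-s) * (max Q a / (2 * M)) := by field_simp
    _ ≤ 2 * π * a ^ (-s) * |Q * d - a| := by
        gcongr; exact max_div_le_abs_mul_sub hM hQ hd hd' haQ

theorem abs_wave_packet_phase_deriv_deriv_le {r e : ℝ} (hM : 1 ≤ M) (hQ : 0 < Q) (hd : 1 / M ≤ d)
    (hd' : d ≤ M) (haQ : a ∉ Set.Icc (Q / (2 * M)) (2 * M * Q)) (he : |e| ≤ M) :
    |2 * π * r ^ 2 * Q * e| ≤ 2 * M ^ 3 / (π * Q) * (2 * π * r * (Q * d - a)) ^ 2 := by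
  have hM0 : 0 < M := by linarith
  have hsep : (Q / (2 * M)) ^ 2 ≤ (Q * d - a) ^ 2 := by
    rw [← sq_abs (Q * d - a)]
    exact pow_le_pow_left₀ (by positivity)
      ((div_le_div_of_nonneg_right (le_max_left Q a) (by positivity)).trans
        (max_div_le_abs_mul_sub hM hQ hd hd' haQ)) 2
  calc |2 * π * r ^ 2 * Q * e| ≤ 2 * π * r ^ 2 * Q * M := by
        rw [abs_mul, abs_of_nonneg (by positivity)]; gcongr
    _ = 2 * M ^ 3 / (π * Q) * ((2 * π * r) ^ 2 * (Q / (2 * M)) ^ 2) := by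
        field_simp
    _ ≤ 2 * M ^ 3 / (π * Q) * ((2 * π * r) ^ 2 * (Q * d - a) ^ 2) := by gcongr
    _ = 2 * M ^ 3 / (π * Q) * (2 * π * r * (Q * d - a)) ^ 2 := by ring


theorem hasDerivAt_wave_packet_phase {φ : ℝ → ℝ} (hφ : Differentiable ℝ φ) (ha : 0 < a) (x : ℝ) :
    HasDerivAt (fun x => 2 * π * (Q * φ (a ^ (-s) * x + b) - a ^ (1 - s) * x))
      (2 * π * a ^ (-s) * (Q * deriv φ (a ^ (-s) * x + b) - a)) x := by
  have hars : a ^ (1 - s) = a ^ (-s) * a := by rw [sub_eq_neg_add, rpow_add ha, rpow_one]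
  refine (((hφ _).hasDerivAt.comp_mul_add.const_mul Q).sub
    ((hasDerivAt_id x).const_mul _)).const_mul _ |>.congr_deriv ?_
  rw [smul_eq_mul, hars]; ring

theorem hasDerivAt_wave_packet_phase_deriv {f : ℝ → ℝ} {r : ℝ} (hf : Differentiable ℝ f)
    (x : ℝ) : HasDerivAt (fun x => 2 * π * r * (Q * f (r * x + b) - a))
      (2 * π * r ^ 2 * Q * deriv f (r * x + b)) x := by
  refine (((hf _).hasDerivAt.comp_mul_add.const_mul Q).sub_const a).const_mul _ |>.congr_deriv ?_
  rw [smul_eq_mul]; ring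

theorem add_le_mul_rpow_neg {A B : ℝ} (hM : 0 < M) (hQ : 1 ≤ Q) (hs0 : 0 ≤ s) (hA : 0 ≤ A) :
    M * (A + B) / (π * Q ^ (1 - s) / M) + 2 * M ^ 3 / (π * Q) * (M * A) ≤
      ((M ^ 2 * (A + B) + 2 * M ^ 4 * A) / π + 1) * Q ^ (-(1 - s)) := by
  have hX : 0 < Q ^ (1 - s) := rpow_pos_of_pos (by linarith) _
  have hXQ : Q ^ (1 - s) ≤ Q := by
    simpa using rpow_le_rpow_of_exponent_le hQ (by linarith : 1 - s ≤ 1)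
  rw [rpow_neg (by linarith)]
  calc M * (A + B) / (π * Q ^ (1 - s) / M) + 2 * M ^ 3 / (π * Q) * (M * A)
      = M ^ 2 * (A + B) / π * (Q ^ (1 - s))⁻¹ + 2 * M ^ 4 * A / π * Q⁻¹ := by
        field_simp
    _ ≤ M ^ 2 * (A + B) / π * (Q ^ (1 - s))⁻¹ + 2 * M ^ 4 * A / π * (Q ^ (1 - s))⁻¹ := by
        gcongr
    _ ≤ ((M ^ 2 * (A + B) + 2 * M ^ 4 * A) / π + 1) * (Q ^ (1 - s))⁻¹ := by
        rw [← add_mul, ← add_div]; gcongr; linarith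

end WavePacketPhase

theorem hasDerivAt_ofReal_comp_mul_add_mul {α : ℝ → ℝ} {w : ℝ → ℂ} {r b x : ℝ}
    (hα : Differentiable ℝ α) (hw : Differentiable ℝ w) :
    HasDerivAt (fun y => (α (r * y + b) : ℂ) * w y)
      (((r * deriv α (r * x + b) : ℝ) : ℂ) * w x + α (r * x + b) * deriv w x) x :=
  (hα _).hasDerivAt.comp_mul_add.ofReal_comp.mul (hw x).hasDerivAt

theorem norm_ofReal_mul_add_ofReal_mul_le {u v M r : ℝ} {z z' : ℂ} (hu : |u| ≤ M) (hv : |v| ≤ M)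
    (hr0 : 0 ≤ r) (hr1 : r ≤ 1) : ‖((r * u : ℝ) : ℂ) * z + v * z'‖ ≤ M * (‖z‖ + ‖z'‖) := by
  have hru : |r * u| ≤ M := by
    rw [abs_mul, abs_of_nonneg hr0]
    exact (mul_le_of_le_one_left (abs_nonneg u) hr1).trans hu
  calc _ ≤ ‖((r * u : ℝ) : ℂ) * z‖ + ‖(v : ℂ) * z'‖ := norm_add_le _ _
    _ = |r * u| * ‖z‖ + |v| * ‖z'‖ := by
        rw [norm_mul, norm_mul, norm_real, norm_real, Real.norm_eq_abs, Real.norm_eq_abs]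
    _ ≤ M * (‖z‖ + ‖z'‖) := by rw [mul_add]; gcongr

/-- the non-stationary phase estimate in Lemma 3.5: if the frequency `a` is
away from the band `[nN/(2M), 2MnN]`, then the oscillatory integral appearing in the wave
packet transform is of size `O((nN)^{−(1−s)})`, with a constant depending only on `M`, `w`
and `s`. -/
theorem nonstationary_phase_estimate
    (M s : ℝ) (hM : 1 ≤ M) (hs : 1 / 2 < s) (hs1 : s < 1) (w : SchwartzMap ℝ ℂ) :
    ∃ C : ℝ, 0 < C ∧
      ∀ (b : ℝ) (α : ℝ → ℝ) (φ : ℝ → ℝ),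
        ContDiff ℝ 1 α → (∀ t, |α t| ≤ M) → (∀ t, |deriv α t| ≤ M) →
        ContDiff ℝ 2 φ → (∀ t, 1 / M ≤ deriv φ t) → (∀ t, deriv φ t ≤ M) →
        (∀ t, |deriv (deriv φ) t| ≤ M) →
        ∀ (a : ℝ), 1 ≤ a → ∀ n N : ℕ, 0 < n → 0 < N →
          a ∉ Set.Icc (((n : ℝ) * N) / (2 * M)) (2 * M * ((n : ℝ) * N)) →
          ‖∫ x : ℝ,
              ((α (a ^ (-s) * x + b) : ℝ) : ℂ) * w x *
                Complex.exp
                  ((2 * Real.pi * ((n : ℝ) * N * φ (a ^ (-s) * x + b) - a ^ (1 - s) * x) : ℝ) *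
                    Complex.I)‖
            ≤ C * ((n : ℝ) * N) ^ (-(1 - s)) := by
  have hw' : Integrable (deriv w) :=
    funext (SchwartzMap.derivCLM_apply ℝ w) ▸ (SchwartzMap.derivCLM ℝ ℂ w).integrable
  have hA : 0 ≤ ∫ x, ‖w x‖ := integral_nonneg fun _ => norm_nonneg _
  refine ⟨(M ^ 2 * ((∫ x, ‖w x‖) + ∫ x, ‖deriv w x‖) + 2 * M ^ 4 * ∫ x, ‖w x‖) / π + 1,
    by positivity, ?_⟩
  intro b α φ hα hαM hα'M hφ hφ'lo hφ'hi hφ''M a ha n N hn hN haQ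
  have hQ : 1 ≤ (n : ℝ) * N :=
    one_le_mul_of_one_le_of_one_le (by exact_mod_cast hn) (by exact_mod_cast hN)
  have ha0 : 0 < a := by linarith
  have hs0 : 0 ≤ s := by linarith
  refine (norm_integral_mul_exp_le_of_abs_deriv_ge
    (fun x => hasDerivAt_ofReal_comp_mul_add_mul hα.differentiable_one w.differentiable)
    (hasDerivAt_wave_packet_phase (hφ.differentiable two_ne_zero) ha0)
    (hasDerivAt_wave_packet_phase_deriv ((hφ.iterate_deriv' 1 1).differentiable one_ne_zero))
    (by positivity)
    (fun _ => le_abs_wave_packet_phase_deriv hM (by linarith) ha0 hs0 hs1.le (hφ'lo _) (hφ'hi _)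
      haQ)
    (fun _ => abs_wave_packet_phase_deriv_deriv_le hM (by linarith) (hφ'lo _) (hφ'hi _) haQ
      (hφ''M _))
    (w.integrable.norm.const_mul M) ((w.integrable.norm.add hw'.norm).const_mul M)
    (fun x => by
      simpa using mul_le_mul_of_nonneg_right (hαM (a ^ (-s) * x + b)) (norm_nonneg (w x)))
    (fun x => norm_ofReal_mul_add_ofReal_mul_le (hα'M _) (hαM _) (rpow_nonneg ha0.le _)
      (rpow_le_one_of_one_le_of_nonpos ha (by linarith)))).trans ?_
  rw [integral_const_mul, integral_const_mul, integral_add' w.integrable.norm hw'.norm]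
  exact add_le_mul_rpow_neg (by linarith) hQ hs0 hA
end

section
/- Let w be a mother wave packet with parameters d ∈ (0,1] and s ∈ (1/2,1), and assume additionally that ŵ is even. Let N ≥ 1 and λ ∈ (0,1) with λN ≥ 1, and set f(t) = e^{2πiNt} + e^{2πiλNt}. Then for all |a| ≥ 1 and b ∈ ℝ, W_f(a,b) = |a|^{−s/2}( e^{2πiNb} ŵ(|a|^{−s}(a−N)) + e^{2πiλNb} ŵ(|a|^{−s}(a−λN)) ). Moreover, if the sets Z_N = {a ≥ 1 : |a − N| ≤ d·a^s} and Z_{λN} = {a ≥ 1 : |a − λN| ≤ d·a^s} are disjoint, then for every (a,b) with a ≥ 1 and W_f(a,b) ≠ 0: if a ∈ Z_N then v_f(a,b) = N, and if a ∈ Z_{λN} then v_f(a,b) = λN; and if a ∉ Z_N ∪ Z_{λN} then W_f(a,b) = 0. -/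
open MeasureTheory Filter Set

noncomputable section

section Aux

lemma ft_eq_fourierIntegral (f : ℝ → ℂ) (ξ : ℝ) : ft f ξ = FourierTransform.fourier f ξ := by
  rw [Real.fourier_real_eq_integral_exp_smul]
  unfold ft
  congr 1
  ext t
  rw [smul_eq_mul, mul_comm]
  congr 2
  push_cast
  ring

lemma conj_eq_self_of_ft
    (w : ℝ → ℂ) (W : SchwartzMap ℝ ℂ) (hW : ∀ t, W t = w t)
    (h_re : ∀ ξ : ℝ, (ft w ξ).im = 0) (h_even : ∀ ξ, ft w (-ξ) = ft w ξ) :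
    ∀ t, (starRingEnd ℂ) (w t) = w t := by
  have hwW : w = ⇑W := funext fun t => (hW t).symm
  set g : ℝ → ℂ := FourierTransform.fourier w with hg
  have hg_conj : ∀ ξ, (starRingEnd ℂ) (g ξ) = g ξ := by
    intro ξ
    rw [Complex.conj_eq_iff_im]
    rw [hg, ← ft_eq_fourierIntegral]
    exact h_re ξ
  have hg_even : ∀ ξ, g (-ξ) = g ξ := by
    intro ξ; rw [hg, ← ft_eq_fourierIntegral, ← ft_eq_fourierIntegral]; exact h_even ξ
  have hint : Integrable w := by rw [hwW]; exact W.integrable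
  have hgint : Integrable g := by
    have : g = ⇑(SchwartzMap.fourierTransformCLM ℝ W) := by
      ext ξ; rw [hg, hwW, SchwartzMap.fourierTransformCLM_apply, SchwartzMap.fourier_coe]
    rw [this]; exact (SchwartzMap.fourierTransformCLM ℝ W).integrable
  have hinv : ∀ x, FourierTransform.fourier g (-x) = w x := by
    intro x
    have h1 : FourierTransformInv.fourierInv (FourierTransform.fourier w) x = w x := by
      apply MeasureTheory.Integrable.fourierInv_fourier_eq hint hgint
      rw [hwW]; exact W.continuous.continuousAt
    rw [← h1, Real.fourierInv_eq_fourier_neg]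
  have hconj : ∀ y, (starRingEnd ℂ) (FourierTransform.fourier g y) = FourierTransform.fourier g (-y) := by
    intro y
    rw [Real.fourier_real_eq_integral_exp_smul,
      Real.fourier_real_eq_integral_exp_smul, ← integral_conj]
    congr 1; ext ξ
    rw [smul_eq_mul, smul_eq_mul, map_mul, hg_conj]
    congr 1
    rw [← Complex.exp_conj]
    congr 1
    simp only [map_mul, Complex.conj_ofReal, Complex.conj_I]
    push_cast
    ring
  intro t
  rw [← hinv t, hconj, neg_neg]
  have heq : FourierTransform.fourier g t = FourierTransform.fourier g (-t) := by
    rw [Real.fourier_real_eq_integral_exp_smul,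
      Real.fourier_real_eq_integral_exp_smul]
    rw [← integral_neg_eq_self
      (fun ξ : ℝ => Complex.exp (↑(-2 * Real.pi * ξ * t) * Complex.I) • g ξ)]
    congr 1; ext ξ
    rw [hg_even]
    congr 3
    push_cast
    ring
  exact heq

lemma key_harmonic (w : ℝ → ℂ) (hw_int : Integrable w)
    (hw_conj : ∀ t, (starRingEnd ℂ) (w t) = w t)
    (s a b ν : ℝ) (ha : 1 ≤ |a|) :
    Integrable (fun t => (starRingEnd ℂ) (wavePacket w s a b t) *
      Complex.exp ((2 * Real.pi * ν * t : ℝ) * Complex.I)) ∧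
    (∫ t : ℝ, (starRingEnd ℂ) (wavePacket w s a b t) *
        Complex.exp ((2 * Real.pi * ν * t : ℝ) * Complex.I)) =
      ((|a| ^ (-(s / 2)) : ℝ) : ℂ) * (Complex.exp ((2 * Real.pi * ν * b : ℝ) * Complex.I) *
        ft w (|a| ^ (-s) * (a - ν))) := by
  have ha0 : (0:ℝ) < |a| := lt_of_lt_of_le one_pos ha
  set A : ℝ := |a| ^ s with hA_def
  have hA : 0 < A := Real.rpow_pos_of_pos ha0 s
  set ξ : ℝ := |a| ^ (-s) * (a - ν) with hξ_def
  have hξA : ξ * A = a - ν := by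
    rw [hξ_def, hA_def, mul_comm (|a| ^ (-s)) (a - ν), mul_assoc,
      ← Real.rpow_add ha0]
    simp
  set G : ℝ → ℂ := fun u => w u * Complex.exp ((-(2 * Real.pi * ξ * u) : ℝ) * Complex.I)
    with hG_def
  have hG_int : Integrable G := by
    have h1 : Integrable
        (fun u : ℝ => Complex.exp ((-(2 * Real.pi * ξ * u) : ℝ) * Complex.I) * w u) := by
      apply Integrable.bdd_mul (c := 1) hw_int
      · exact (Complex.continuous_exp.comp (by continuity)).aestronglyMeasurable
      · filter_upwards with u
        simp [Complex.norm_exp]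
    apply h1.congr
    filter_upwards with u
    rw [hG_def, mul_comm]
  have hpt : ∀ t, (starRingEnd ℂ) (wavePacket w s a b t) *
      Complex.exp ((2 * Real.pi * ν * t : ℝ) * Complex.I) =
      (((|a| ^ (s / 2) : ℝ) : ℂ) * Complex.exp ((2 * Real.pi * ν * b : ℝ) * Complex.I)) *
        G (A * (t - b)) := by
    intro t
    have hconj_exp : (starRingEnd ℂ) (Complex.exp ((2 * Real.pi * (t - b) * a : ℝ) * Complex.I)) =
        Complex.exp (-(((2 * Real.pi * (t - b) * a : ℝ) : ℂ) * Complex.I)) := by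
      rw [← Complex.exp_conj]
      congr 1
      simp only [map_mul, Complex.conj_ofReal, Complex.conj_I]
      ring
    rw [wavePacket, map_mul, map_mul, hconj_exp, Complex.conj_ofReal, hw_conj]
    rw [hG_def]
    have hexp : Complex.exp (-(((2 * Real.pi * (t - b) * a : ℝ) : ℂ) * Complex.I)) *
        Complex.exp ((2 * Real.pi * ν * t : ℝ) * Complex.I) =
        Complex.exp ((2 * Real.pi * ν * b : ℝ) * Complex.I) *
        Complex.exp ((-(2 * Real.pi * ξ * (A * (t - b))) : ℝ) * Complex.I) := by
      rw [← Complex.exp_add, ← Complex.exp_add]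
      congr 1
      have h2 : (ξ : ℂ) * (A : ℂ) = (a : ℂ) - (ν : ℂ) := by
        exact_mod_cast congrArg Complex.ofReal hξA
      push_cast
      linear_combination (2 * (Real.pi : ℂ) * ((t:ℂ) - b)) * Complex.I * h2
    linear_combination (((|a| ^ (s / 2) : ℝ) : ℂ) * w (A * (t - b))) * hexp
  have hcomp_int : Integrable (fun t : ℝ => G (A * (t - b))) := by
    have h1 : Integrable (fun x : ℝ => G (A * x)) := hG_int.comp_mul_left' hA.ne'
    exact h1.comp_sub_right b
  constructor
  · apply (hcomp_int.const_mul _).congr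
    filter_upwards with t
    exact (hpt t).symm
  · calc (∫ t : ℝ, (starRingEnd ℂ) (wavePacket w s a b t) *
        Complex.exp ((2 * Real.pi * ν * t : ℝ) * Complex.I))
        = ∫ t : ℝ, (((|a| ^ (s / 2) : ℝ) : ℂ) *
            Complex.exp ((2 * Real.pi * ν * b : ℝ) * Complex.I)) * G (A * (t - b)) := by
          congr 1; ext t; exact hpt t
      _ = (((|a| ^ (s / 2) : ℝ) : ℂ) * Complex.exp ((2 * Real.pi * ν * b : ℝ) * Complex.I)) *
            ∫ t : ℝ, G (A * (t - b)) := integral_const_mul _ _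
      _ = _ := by
          have h1 : (∫ t : ℝ, G (A * (t - b))) = ∫ t : ℝ, G (A * t) :=
            integral_sub_right_eq_self (fun t => G (A * t)) b
          have h2 : (∫ t : ℝ, G (A * t)) = |A⁻¹| • ∫ u, G u := Measure.integral_comp_mul_left G A
          have h3 : |A⁻¹| = |a| ^ (-s) := by
            rw [abs_of_pos (inv_pos.mpr hA), hA_def, ← Real.rpow_neg ha0.le]
          have h4 : (∫ u, G u) = ft w ξ := rfl
          rw [h1, h2, h3, h4]
          rw [Complex.real_smul]
          have h5 : (|a| ^ (s / 2) : ℝ) * |a| ^ (-s) = |a| ^ (-(s / 2)) := by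
            rw [← Real.rpow_add ha0]; ring_nf
          have h6 : ((|a| ^ (s / 2) : ℝ) : ℂ) * ((|a| ^ (-s) : ℝ) : ℂ) =
              ((|a| ^ (-(s/2)) : ℝ) : ℂ) := by
            exact_mod_cast congrArg Complex.ofReal h5
          linear_combination
            (Complex.exp ((2 * Real.pi * ν * b : ℝ) * Complex.I) * ft w ξ) * h6

end Aux

/-- exact separation of two harmonics, Subsection 3.3: for
`f(t) = e^{2πiNt} + e^{2πiλNt}` the wave packet transform is the sum of the two harmonic
transforms; if the frequency supports `Z_N` and `Z_{λN}` are disjoint, then on `Z_N` (where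
`W_f ≠ 0`) the instantaneous frequency information function equals `N`, on `Z_{λN}` it equals
`λN`, and off `Z_N ∪ Z_{λN}` the transform vanishes. -/
theorem sswpt_two_harmonics
    (d s : ℝ) (hd : 0 < d) (hd1 : d ≤ 1) (hs : 1 / 2 < s) (hs1 : s < 1)
    (w : ℝ → ℂ) (hw : IsMotherWavePacket d w) (hw_even : ∀ ξ, ft w (-ξ) = ft w ξ)
    (N l : ℝ) (hN : 1 ≤ N) (hl : l ∈ Set.Ioo (0 : ℝ) 1) (hlN : 1 ≤ l * N)
    (f : ℝ → ℂ)
    (hf : ∀ t, f t = Complex.exp ((2 * Real.pi * N * t : ℝ) * Complex.I) +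
      Complex.exp ((2 * Real.pi * (l * N) * t : ℝ) * Complex.I)) :
    (∀ a b : ℝ, 1 ≤ |a| →
      WPT w s f a b =
        ((|a| ^ (-(s / 2)) : ℝ) : ℂ) *
          (Complex.exp ((2 * Real.pi * N * b : ℝ) * Complex.I) * ft w (|a| ^ (-s) * (a - N)) +
            Complex.exp ((2 * Real.pi * (l * N) * b : ℝ) * Complex.I) *
              ft w (|a| ^ (-s) * (a - l * N)))) ∧
    (Disjoint {a : ℝ | 1 ≤ a ∧ |a - N| ≤ d * a ^ s}
        {a : ℝ | 1 ≤ a ∧ |a - l * N| ≤ d * a ^ s} →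
      ∀ a b : ℝ, 1 ≤ a →
        (WPT w s f a b ≠ 0 → a ∈ {a : ℝ | 1 ≤ a ∧ |a - N| ≤ d * a ^ s} →
          vIF w s f a b = (N : ℂ)) ∧
        (WPT w s f a b ≠ 0 → a ∈ {a : ℝ | 1 ≤ a ∧ |a - l * N| ≤ d * a ^ s} →
          vIF w s f a b = ((l * N : ℝ) : ℂ)) ∧
        (a ∉ {a : ℝ | 1 ≤ a ∧ |a - N| ≤ d * a ^ s} ∪
            {a : ℝ | 1 ≤ a ∧ |a - l * N| ≤ d * a ^ s} →
          WPT w s f a b = 0)) := by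
  obtain ⟨W, hW⟩ := hw.schwartz
  have hw_conj : ∀ t, (starRingEnd ℂ) (w t) = w t :=
    conj_eq_self_of_ft w W hW hw.real_ft hw_even
  have hw_int : Integrable w := by
    rw [show w = ⇑W from funext fun t => (hW t).symm]; exact W.integrable
  have hmain : ∀ a b : ℝ, 1 ≤ |a| →
      WPT w s f a b =
        ((|a| ^ (-(s / 2)) : ℝ) : ℂ) *
          (Complex.exp ((2 * Real.pi * N * b : ℝ) * Complex.I) * ft w (|a| ^ (-s) * (a - N)) +
            Complex.exp ((2 * Real.pi * (l * N) * b : ℝ) * Complex.I) *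
              ft w (|a| ^ (-s) * (a - l * N))) := by
    intro a b ha
    obtain ⟨k1i, k1e⟩ := key_harmonic w hw_int hw_conj s a b N ha
    obtain ⟨k2i, k2e⟩ := key_harmonic w hw_int hw_conj s a b (l * N) ha
    unfold WPT
    have hsplit : (fun t => (starRingEnd ℂ) (wavePacket w s a b t) * f t) =
        fun t => (starRingEnd ℂ) (wavePacket w s a b t) *
            Complex.exp ((2 * Real.pi * N * t : ℝ) * Complex.I) +
          (starRingEnd ℂ) (wavePacket w s a b t) *
            Complex.exp ((2 * Real.pi * (l * N) * t : ℝ) * Complex.I) := by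
      funext t; rw [hf t]; ring
    rw [hsplit, integral_add k1i k2i, k1e, k2e]
    ring
  refine ⟨hmain, ?_⟩
  intro hdisj a b ha1
  have habs : |a| = a := abs_of_nonneg (by linarith)
  have ha' : (1:ℝ) ≤ |a| := by rw [habs]; exact ha1
  have ha0 : (0:ℝ) < a := by linarith
  have hzero : ∀ ν : ℝ, d * a ^ s < |a - ν| → ft w (|a| ^ (-s) * (a - ν)) = 0 := by
    intro ν hν
    apply hw.supp_ft
    intro hmem
    rw [Set.mem_Ioo] at hmem
    have h1 : |(|a| ^ (-s) * (a - ν))| < d := abs_lt.mpr hmem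
    rw [abs_mul, habs, abs_of_pos (Real.rpow_pos_of_pos ha0 (-s))] at h1
    have hpos : (0:ℝ) < a ^ (-s) := Real.rpow_pos_of_pos ha0 (-s)
    have hmul : a ^ (-s) * (d * a ^ s) < a ^ (-s) * |a - ν| := by
      exact mul_lt_mul_of_pos_left hν hpos
    have hone : a ^ (-s) * a ^ s = 1 := by
      rw [← Real.rpow_add ha0]; simp
    have heq : a ^ (-s) * (d * a ^ s) = d := by
      calc a ^ (-s) * (d * a ^ s) = d * (a ^ (-s) * a ^ s) := by ring
        _ = d := by rw [hone, mul_one]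
    linarith
  have hderiv_aux : ∀ (ν : ℝ) (C : ℂ),
      (∀ b' : ℝ, WPT w s f a b' = C * Complex.exp ((2 * Real.pi * ν * b' : ℝ) * Complex.I)) →
      WPT w s f a b ≠ 0 → vIF w s f a b = ((ν : ℝ) : ℂ) := by
    intro ν C hWeq hWne
    have hcast : ∀ b' : ℝ, ((2 * Real.pi * ν * b' : ℝ) : ℂ) * Complex.I =
        (2 * (Real.pi : ℂ) * (ν : ℂ) * Complex.I) * (b' : ℂ) := by
      intro b'; push_cast; ring
    have hfun : (fun b' : ℝ => WPT w s f a b') =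
        fun b' : ℝ => C * Complex.exp ((2 * (Real.pi : ℂ) * (ν : ℂ) * Complex.I) * (b' : ℂ)) := by
      funext b'; rw [hWeq b', hcast b']
    have hWb : WPT w s f a b =
        C * Complex.exp ((2 * (Real.pi : ℂ) * (ν : ℂ) * Complex.I) * (b : ℂ)) := by
      rw [hWeq b, hcast b]
    have hder : deriv (fun b' : ℝ => WPT w s f a b') b =
        C * (Complex.exp ((2 * (Real.pi : ℂ) * (ν : ℂ) * Complex.I) * (b : ℂ)) *
          (2 * (Real.pi : ℂ) * (ν : ℂ) * Complex.I)) := by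
      rw [hfun]
      apply HasDerivAt.deriv
      have h1 : HasDerivAt (fun b' : ℝ => (2 * (Real.pi : ℂ) * (ν : ℂ) * Complex.I) * (b' : ℂ))
          (2 * (Real.pi : ℂ) * (ν : ℂ) * Complex.I) b := by
        simpa using (Complex.ofRealCLM.hasDerivAt (x := b)).const_mul
          (2 * (Real.pi : ℂ) * (ν : ℂ) * Complex.I)
      exact h1.cexp.const_mul C
    unfold vIF
    rw [div_eq_iff (mul_ne_zero Complex.two_pi_I_ne_zero hWne), hder, hWb]
    ring
  refine ⟨?_, ?_, ?_⟩
  · intro hWne haZ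
    have hnot2 : a ∉ {a : ℝ | 1 ≤ a ∧ |a - l * N| ≤ d * a ^ s} :=
      Set.disjoint_left.mp hdisj haZ
    have hlt : d * a ^ s < |a - l * N| := by
      by_contra hcon
      exact hnot2 ⟨ha1, le_of_not_gt hcon⟩
    apply hderiv_aux N (((|a| ^ (-(s / 2)) : ℝ) : ℂ) * ft w (|a| ^ (-s) * (a - N))) _ hWne
    intro b'
    rw [hmain a b' ha', hzero _ hlt]
    ring
  · intro hWne haZ
    have hnot1 : a ∉ {a : ℝ | 1 ≤ a ∧ |a - N| ≤ d * a ^ s} :=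
      Set.disjoint_right.mp hdisj haZ
    have hlt : d * a ^ s < |a - N| := by
      by_contra hcon
      exact hnot1 ⟨ha1, le_of_not_gt hcon⟩
    apply hderiv_aux (l * N) (((|a| ^ (-(s / 2)) : ℝ) : ℂ) * ft w (|a| ^ (-s) * (a - l * N))) _ hWne
    intro b'
    rw [hmain a b' ha', hzero _ hlt]
    ring
  · intro hnot
    rw [Set.mem_union] at hnot
    push_neg at hnot
    obtain ⟨h1, h2⟩ := hnot
    have hlt1 : d * a ^ s < |a - N| := by
      by_contra hcon; exact h1 ⟨ha1, le_of_not_gt hcon⟩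
    have hlt2 : d * a ^ s < |a - l * N| := by
      by_contra hcon; exact h2 ⟨ha1, le_of_not_gt hcon⟩
    rw [hmain a b ha', hzero _ hlt1, hzero _ hlt2]
    ring
end
end
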